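/- arXiv:2211.08270 — 7 statements merged into one kernel-verified Lean document; each statement's English description precedes it below -/
import Mathlib

section
/- A path of odd length (i.e., P_n with n even, n ≥ 2) admits no locally irregular edge coloring with any number of colors; that is, there is no edge coloring of P_n (n even) in which every color class induces a locally irregular subgraph. -/
open Finset SimpleGraph

/-- Degree of `v` in the color class `k` of the edge coloring `c` of `G`. -/
def degIn {V K : Type*} [Fintype V] (G : SimpleGraph V) [DecidableRel G.Adj] [DecidableEq K]
    (c : Sym2 V → K) (k : K) (v : V) : ℕ :=
  (Finset.univ.filter fun w => G.Adj v w ∧ c s(v, w) = k).card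

/-- `c` is a locally irregular edge coloring of the simple graph `G`. -/
def IsLIC {V K : Type*} [Fintype V] (G : SimpleGraph V) [DecidableRel G.Adj] [DecidableEq K]
    (c : Sym2 V → K) : Prop :=
  ∀ v w, G.Adj v w → degIn G c (c s(v, w)) v ≠ degIn G c (c s(v, w)) w

/-- In the 2-multigraph `²G`, each edge of `G` carries a pair of colors (one for each
parallel copy).  `degIn2 G c k v` is the degree of `v` in the color class `k`. -/
def degIn2 {V K : Type*} [Fintype V] (G : SimpleGraph V) [DecidableRel G.Adj] [DecidableEq K]
    (c : Sym2 V → K × K) (k : K) (v : V) : ℕ :=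
  ∑ w ∈ Finset.univ.filter (fun w => G.Adj v w),
    ((if (c s(v, w)).1 = k then 1 else 0) + (if (c s(v, w)).2 = k then 1 else 0))

/-- `c` is a locally irregular edge coloring of the 2-multigraph `²G`. -/
def IsLIC2 {V K : Type*} [Fintype V] (G : SimpleGraph V) [DecidableRel G.Adj] [DecidableEq K]
    (c : Sym2 V → K × K) : Prop :=
  ∀ v w, G.Adj v w → ∀ k : K, ((c s(v, w)).1 = k ∨ (c s(v, w)).2 = k) →
    degIn2 G c k v ≠ degIn2 G c k w

instance {n : ℕ} : DecidableRel (SimpleGraph.pathGraph n).Adj := fun _ _ =>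
  decidable_of_iff _ (SimpleGraph.pathGraph_adj).symm

section Aux

variable {K : Type*} [DecidableEq K] {n : ℕ}

lemma deg_zero (c : Sym2 (Fin n) → K) (hn : 1 < n) (k : K) :
    degIn (pathGraph n) c k ⟨0, by omega⟩ =
      if c s(⟨0, by omega⟩, ⟨1, hn⟩) = k then 1 else 0 := by
  unfold degIn
  have hset : (univ.filter fun w => (pathGraph n).Adj ⟨0, by omega⟩ w ∧ c s(⟨0, by omega⟩, w) = k)
      = if c s((⟨0, by omega⟩ : Fin n), ⟨1, hn⟩) = k then {(⟨1, hn⟩ : Fin n)} else ∅ := by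
    ext w
    simp only [mem_filter, mem_univ, true_and, pathGraph_adj]
    constructor
    · rintro ⟨hadj, hc⟩
      have hw : w = (⟨1, hn⟩ : Fin n) := by
        apply Fin.ext
        simp only [Fin.val_mk] at hadj ⊢
        omega
      subst hw
      simp [hc]
    · intro hw
      split_ifs at hw with h
      · simp only [mem_singleton] at hw
        subst hw
        exact ⟨by simp, h⟩
      · simp at hw
  rw [hset]
  split_ifs <;> simp

lemma deg_mid (c : Sym2 (Fin n) → K) (i : ℕ) (h : i + 2 < n) (k : K) :
    degIn (pathGraph n) c k ⟨i+1, by omega⟩ =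
      (if c s((⟨i+1, by omega⟩ : Fin n), ⟨i, by omega⟩) = k then 1 else 0)
      + (if c s((⟨i+1, by omega⟩ : Fin n), ⟨i+2, h⟩) = k then 1 else 0) := by
  have hi : i < n := by omega
  have hi1 : i + 1 < n := by omega
  unfold degIn
  have hset : (univ.filter fun w => (pathGraph n).Adj ⟨i+1, hi1⟩ w ∧ c s(⟨i+1, hi1⟩, w) = k)
      = (if c s((⟨i+1, hi1⟩ : Fin n), ⟨i, hi⟩) = k then {(⟨i, hi⟩ : Fin n)} else ∅)
        ∪ (if c s((⟨i+1, hi1⟩ : Fin n), ⟨i+2, h⟩) = k then {(⟨i+2, h⟩ : Fin n)} else ∅) := by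
    ext w
    simp only [mem_filter, mem_univ, true_and, pathGraph_adj, mem_union]
    constructor
    · rintro ⟨hadj, hc⟩
      have hadj' : (⟨i+1, hi1⟩ : Fin n).val + 1 = w.val ∨ w.val + 1 = (⟨i+1, hi1⟩ : Fin n).val :=
        hadj
      simp only [Fin.val_mk] at hadj'
      rcases hadj' with hadj' | hadj'
      · right
        have hw : w = (⟨i+2, h⟩ : Fin n) := Fin.ext (by simp only [Fin.val_mk]; omega)
        subst hw; simp [hc]
      · left
        have hw : w = (⟨i, hi⟩ : Fin n) := Fin.ext (by simp only [Fin.val_mk]; omega)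
        subst hw; simp [hc]
    · intro hw
      rcases hw with hw | hw
      · split_ifs at hw with hk
        · simp only [mem_singleton] at hw
          subst hw
          exact ⟨Or.inr rfl, hk⟩
        · simp at hw
      · split_ifs at hw with hk
        · simp only [mem_singleton] at hw
          subst hw
          exact ⟨Or.inl rfl, hk⟩
        · simp at hw
  rw [hset, card_union_of_disjoint]
  · split_ifs <;> simp
  · split_ifs <;> simp [Finset.disjoint_singleton, Fin.ext_iff] <;> omega

lemma deg_last (c : Sym2 (Fin n) → K) (i : ℕ) (h : n = i + 2) (k : K) :
    degIn (pathGraph n) c k ⟨i+1, by omega⟩ =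
      if c s((⟨i+1, by omega⟩ : Fin n), ⟨i, by omega⟩) = k then 1 else 0 := by
  have hi : i < n := by omega
  have hi1 : i + 1 < n := by omega
  unfold degIn
  have hset : (univ.filter fun w => (pathGraph n).Adj ⟨i+1, hi1⟩ w ∧ c s(⟨i+1, hi1⟩, w) = k)
      = if c s((⟨i+1, hi1⟩ : Fin n), ⟨i, hi⟩) = k then {(⟨i, hi⟩ : Fin n)} else ∅ := by
    ext w
    simp only [mem_filter, mem_univ, true_and, pathGraph_adj]
    constructor
    · rintro ⟨hadj, hc⟩
      have hadj' : (⟨i+1, hi1⟩ : Fin n).val + 1 = w.val ∨ w.val + 1 = (⟨i+1, hi1⟩ : Fin n).val :=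
        hadj
      simp only [Fin.val_mk] at hadj'
      have hw2 := w.2
      have hw : w = (⟨i, hi⟩ : Fin n) := Fin.ext (by simp only [Fin.val_mk]; omega)
      subst hw; simp [hc]
    · intro hw
      split_ifs at hw with hk
      · simp only [mem_singleton] at hw
        subst hw
        exact ⟨Or.inr rfl, hk⟩
      · simp at hw
  rw [hset]
  split_ifs <;> simp

end Aux

/-- A path of odd length (`P_n` with `n` even, `n ≥ 2`) admits no locally irregular
edge coloring with any set of colors. -/
theorem stmt_3 (n : ℕ) (hn : 2 ≤ n) (hodd : Even n) (K : Type*) [DecidableEq K]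
    (c : Sym2 (Fin n) → K) : ¬ IsLIC (pathGraph n) c := by
  intro hlic
  have key : ∀ i, ∀ (h1 : i < n) (h2 : i + 1 < n), Even i →
      degIn (pathGraph n) c (c s((⟨i, h1⟩ : Fin n), ⟨i+1, h2⟩)) ⟨i, h1⟩ = 1 := by
    intro i
    induction i using Nat.strong_induction_on with
    | _ i ih =>
      intro h1 h2 heven
      rcases Nat.eq_zero_or_pos i with hz | hp
      · subst hz
        have h := deg_zero c (by omega : 1 < n) (c s((⟨0, h1⟩ : Fin n), ⟨1, h2⟩))
        simpa using h
      · obtain ⟨i', rfl⟩ : ∃ i', i = i' + 2 := by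
          obtain ⟨t, ht⟩ := heven
          exact ⟨i - 2, by omega⟩
        have p0 : i' < n := by omega
        have p1 : i' + 1 < n := by omega
        have heven' : Even i' := by
          obtain ⟨t, ht⟩ := heven
          exact ⟨t - 1, by omega⟩
        have d0 : degIn (pathGraph n) c (c s((⟨i', p0⟩ : Fin n), ⟨i'+1, p1⟩)) ⟨i', p0⟩ = 1 :=
          ih i' (by omega) p0 p1 heven'
        have a01 : (pathGraph n).Adj ⟨i', p0⟩ ⟨i'+1, p1⟩ := by
          rw [pathGraph_adj]; exact Or.inl rfl
        have hne1 := hlic _ _ a01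
        have dm1 : degIn (pathGraph n) c (c s((⟨i', p0⟩ : Fin n), ⟨i'+1, p1⟩)) ⟨i'+1, p1⟩ =
            (if c s((⟨i'+1, p1⟩ : Fin n), ⟨i', p0⟩)
                = c s((⟨i', p0⟩ : Fin n), ⟨i'+1, p1⟩) then 1 else 0)
            + (if c s((⟨i'+1, p1⟩ : Fin n), ⟨i'+2, h1⟩)
                = c s((⟨i', p0⟩ : Fin n), ⟨i'+1, p1⟩) then 1 else 0) :=
          deg_mid c i' h1 _
        have hcnd1 : c s((⟨i'+1, p1⟩ : Fin n), ⟨i', p0⟩)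
            = c s((⟨i', p0⟩ : Fin n), ⟨i'+1, p1⟩) := by rw [Sym2.eq_swap]
        rw [if_pos hcnd1] at dm1
        by_cases hc1 : c s((⟨i'+1, p1⟩ : Fin n), ⟨i'+2, h1⟩)
            = c s((⟨i', p0⟩ : Fin n), ⟨i'+1, p1⟩)
        · -- the color continues; second edge forces a fresh color at i'+2
          rw [if_pos hc1] at dm1
          have a12 : (pathGraph n).Adj ⟨i'+1, p1⟩ ⟨i'+2, h1⟩ := by
            rw [pathGraph_adj]; exact Or.inl rfl
          have hne2 := hlic _ _ a12
          rw [hc1] at hne2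
          have dm2 : degIn (pathGraph n) c (c s((⟨i', p0⟩ : Fin n), ⟨i'+1, p1⟩)) ⟨i'+2, h1⟩ =
              (if c s((⟨i'+2, h1⟩ : Fin n), ⟨i'+1, p1⟩)
                  = c s((⟨i', p0⟩ : Fin n), ⟨i'+1, p1⟩) then 1 else 0)
              + (if c s((⟨i'+2, h1⟩ : Fin n), ⟨i'+3, h2⟩)
                  = c s((⟨i', p0⟩ : Fin n), ⟨i'+1, p1⟩) then 1 else 0) :=
            deg_mid c (i'+1) h2 _
          have hcnd2 : c s((⟨i'+2, h1⟩ : Fin n), ⟨i'+1, p1⟩)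
              = c s((⟨i', p0⟩ : Fin n), ⟨i'+1, p1⟩) := by rw [Sym2.eq_swap]; exact hc1
          rw [if_pos hcnd2] at dm2
          by_cases hc2 : c s((⟨i'+2, h1⟩ : Fin n), ⟨i'+3, h2⟩)
              = c s((⟨i', p0⟩ : Fin n), ⟨i'+1, p1⟩)
          · rw [if_pos hc2] at dm2
            omega
          · rw [if_neg hc2] at dm2
            show degIn (pathGraph n) c
              (c s((⟨i'+2, h1⟩ : Fin n), ⟨i'+3, h2⟩)) ⟨i'+2, h1⟩ = 1
            have dm3 : degIn (pathGraph n) c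
                (c s((⟨i'+2, h1⟩ : Fin n), ⟨i'+3, h2⟩)) ⟨i'+2, h1⟩ =
                (if c s((⟨i'+2, h1⟩ : Fin n), ⟨i'+1, p1⟩)
                    = c s((⟨i'+2, h1⟩ : Fin n), ⟨i'+3, h2⟩) then 1 else 0)
                + (if c s((⟨i'+2, h1⟩ : Fin n), ⟨i'+3, h2⟩)
                    = c s((⟨i'+2, h1⟩ : Fin n), ⟨i'+3, h2⟩) then 1 else 0) :=
              deg_mid c (i'+1) h2 _
            have hcnd3 : ¬ (c s((⟨i'+2, h1⟩ : Fin n), ⟨i'+1, p1⟩)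
                = c s((⟨i'+2, h1⟩ : Fin n), ⟨i'+3, h2⟩)) := by
              rw [hcnd2]
              exact fun hh => hc2 hh.symm
            rw [if_neg hcnd3, if_pos rfl] at dm3
            omega
        · rw [if_neg hc1] at dm1
          omega
  -- now the contradiction at the far end of the path
  obtain ⟨m, hm, hmeven⟩ : ∃ m, n = m + 2 ∧ Even m := by
    obtain ⟨t, ht⟩ := hodd
    exact ⟨n - 2, by omega, ⟨t - 1, by omega⟩⟩
  have pm : m < n := by omega
  have pm1 : m + 1 < n := by omega
  have dK := key m pm pm1 hmeven
  have aK : (pathGraph n).Adj ⟨m, pm⟩ ⟨m+1, pm1⟩ := by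
    rw [pathGraph_adj]; exact Or.inl rfl
  have hne := hlic _ _ aK
  have dl : degIn (pathGraph n) c (c s((⟨m, pm⟩ : Fin n), ⟨m+1, pm1⟩)) ⟨m+1, pm1⟩ =
      if c s((⟨m+1, pm1⟩ : Fin n), ⟨m, pm⟩)
        = c s((⟨m, pm⟩ : Fin n), ⟨m+1, pm1⟩) then 1 else 0 :=
    deg_last c m hm _
  have hcnd : c s((⟨m+1, pm1⟩ : Fin n), ⟨m, pm⟩)
      = c s((⟨m, pm⟩ : Fin n), ⟨m+1, pm1⟩) := by rw [Sym2.eq_swap]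
  rw [if_pos hcnd] at dl
  omega
end

section
/- No cycle C_n of odd length admits a locally irregular edge coloring. -/
open Finset SimpleGraph

/-!
Call a vertex of the cycle monochromatic when its two edges have the same color. The endpoints
of an edge of color `k` have degree `1` or `2` in color `k`, and degree `2` exactly when they are
monochromatic, so local irregularity forces exactly one endpoint of every edge to be
monochromatic. Being monochromatic is then a proper 2-coloring of the cycle, which is impossible
when its length is odd.
-/

theorem degIn_eq_card_filter_neighborFinset {V K : Type*} [Fintype V] (G : SimpleGraph V)
    [DecidableRel G.Adj] [DecidableEq K] (c : Sym2 V → K) (k : K) (v : V) :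
    degIn G c k v = #{w ∈ G.neighborFinset v | c s(v, w) = k} := by
  unfold degIn
  congr 1
  ext w
  simp

theorem Fin.sub_one_ne_add_one {n : ℕ} (v : Fin (n + 3)) : v - 1 ≠ v + 1 := by
  simp only [ne_eq, sub_eq_iff_eq_add, add_assoc v, left_eq_add]
  exact ne_of_beq_false rfl

theorem degIn_cycleGraph {n : ℕ} {K : Type*} [DecidableEq K] (c : Sym2 (Fin (n + 3)) → K)
    (k : K) (v : Fin (n + 3)) :
    degIn (cycleGraph (n + 3)) c k v =
      (if c s(v, v - 1) = k then 1 else 0) + (if c s(v, v + 1) = k then 1 else 0) := by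
  rw [degIn_eq_card_filter_neighborFinset, cycleGraph_neighborFinset, card_filter,
    sum_pair v.sub_one_ne_add_one]

def IsMonochromaticAt {n : ℕ} [NeZero n] {K : Type*} (c : Sym2 (Fin n) → K) (v : Fin n) : Prop :=
  c s(v - 1, v) = c s(v, v + 1)

instance {n : ℕ} [NeZero n] {K : Type*} [DecidableEq K] (c : Sym2 (Fin n) → K) (v : Fin n) :
    Decidable (IsMonochromaticAt c v) :=
  inferInstanceAs (Decidable (_ = _))

section cycle

variable {n : ℕ} {K : Type*} [DecidableEq K] (c : Sym2 (Fin (n + 3)) → K) (v : Fin (n + 3))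

theorem degIn_cycleGraph_color_left :
    degIn (cycleGraph (n + 3)) c (c s(v, v + 1)) v = if IsMonochromaticAt c v then 2 else 1 := by
  simp only [degIn_cycleGraph, if_pos, IsMonochromaticAt, Sym2.eq_swap (a := v)]
  split_ifs <;> rfl

theorem degIn_cycleGraph_color_right :
    degIn (cycleGraph (n + 3)) c (c s(v, v + 1)) (v + 1) =
      if IsMonochromaticAt c (v + 1) then 2 else 1 := by
  simp only [degIn_cycleGraph, add_sub_cancel_right, Sym2.eq_swap (a := v + 1), if_pos,
    IsMonochromaticAt, eq_comm (a := c s(v + 1 + 1, v + 1))]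
  split_ifs <;> rfl

variable {c}

theorem IsLIC.isMonochromaticAt_add_one_iff (h : IsLIC (cycleGraph (n + 3)) c) :
    IsMonochromaticAt c (v + 1) ↔ ¬ IsMonochromaticAt c v := by
  have hadj : (cycleGraph (n + 3)).Adj v (v + 1) := by
    rw [cycleGraph_adj, add_sub_cancel_left]
    exact Or.inr rfl
  have H := h v (v + 1) hadj
  rw [degIn_cycleGraph_color_left, degIn_cycleGraph_color_right] at H
  split_ifs at H <;> tauto

theorem IsLIC.isMonochromaticAt_ne_add_one (h : IsLIC (cycleGraph (n + 3)) c) :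
    IsMonochromaticAt c v ≠ IsMonochromaticAt c (v + 1) := fun e =>
  iff_not_self (e ▸ h.isMonochromaticAt_add_one_iff v)

def IsLIC.coloring (h : IsLIC (cycleGraph (n + 3)) c) : (cycleGraph (n + 3)).Coloring Prop :=
  Coloring.mk (IsMonochromaticAt c) fun {v w} hadj => by
    rcases cycleGraph_adj.mp hadj with hvw | hwv
    · rw [sub_eq_iff_eq_add'] at hvw
      subst hvw
      exact (h.isMonochromaticAt_ne_add_one w).symm
    · rw [sub_eq_iff_eq_add'] at hwv
      subst hwv
      exact h.isMonochromaticAt_ne_add_one v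

end cycle

/-- No odd cycle admits a locally irregular edge coloring. -/
theorem stmt_5 (n : ℕ) (hn : 3 ≤ n) (hodd : Odd n) (K : Type*) [DecidableEq K]
    (c : Sym2 (Fin n) → K) : ¬ IsLIC (cycleGraph n) c := by
  intro h
  obtain ⟨m, rfl⟩ : ∃ m, n = m + 3 := ⟨n - 3, by omega⟩
  have hle := h.coloring.colorable.chromaticNumber_le
  rw [chromaticNumber_cycleGraph_of_odd (m + 3) (by omega) hodd, Fintype.card_prop] at hle
  exact absurd hle (by decide)
end

section
/- For every path P_n with n ≥ 3, the 2-multigraph ²P_n obtained by doubling every edge admits a locally irregular edge coloring with at most 2 colors. -/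
open Finset SimpleGraph

/-- Contribution of a doubled edge with color pair `p` to the degree in color class `k`. -/
def contrib (p : Fin 2 × Fin 2) (k : Fin 2) : ℕ :=
  (if p.1 = k then 1 else 0) + (if p.2 = k then 1 else 0)

/-- The coloring pattern: `F2 m i` is the pair of colors of (the two copies of) the `i`-th
edge of the path with `m` edges. -/
def F2 (m i : ℕ) : Fin 2 × Fin 2 :=
  if m % 2 = 0 then (if i % 4 ≤ 1 then (0, 0) else (1, 1))
  else if i = 0 then (0, 0)
  else if i = 1 then (0, 1)
  else if i = 2 then (1, 1)
  else if i % 4 = 3 ∨ i % 4 = 0 then (0, 0) else (1, 1)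

lemma F2_even_lo {m i : ℕ} (hm : m % 2 = 0) (h : i % 4 ≤ 1) : F2 m i = (0, 0) := by
  simp [F2, hm, h]

lemma F2_even_hi {m i : ℕ} (hm : m % 2 = 0) (h : ¬ i % 4 ≤ 1) : F2 m i = (1, 1) := by
  simp [F2, hm, h]

lemma F2_odd0 {m : ℕ} (hm : m % 2 = 1) : F2 m 0 = (0, 0) := by simp [F2, hm]
lemma F2_odd1 {m : ℕ} (hm : m % 2 = 1) : F2 m 1 = (0, 1) := by simp [F2, hm]
lemma F2_odd2 {m : ℕ} (hm : m % 2 = 1) : F2 m 2 = (1, 1) := by simp [F2, hm]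

lemma F2_oddA {m i : ℕ} (hm : m % 2 = 1) (h3 : 3 ≤ i) (h : i % 4 = 3 ∨ i % 4 = 0) :
    F2 m i = (0, 0) := by
  have h0 : i ≠ 0 := by omega
  have h1 : i ≠ 1 := by omega
  have h2 : i ≠ 2 := by omega
  simp [F2, hm, h0, h1, h2, h]

lemma F2_oddB {m i : ℕ} (hm : m % 2 = 1) (h3 : 3 ≤ i) (h : ¬(i % 4 = 3 ∨ i % 4 = 0)) :
    F2 m i = (1, 1) := by
  have h0 : i ≠ 0 := by omega
  have h1 : i ≠ 1 := by omega
  have h2 : i ≠ 2 := by omega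
  simp [F2, hm, h0, h1, h2, h]

/-- The key arithmetic fact: for an edge `i` of the path and a color `k` used on it,
the contributions of the two neighbouring edges to the degrees of the endpoints differ. -/
lemma key (n : ℕ) (hn : 3 ≤ n) (i : ℕ) (hi : i + 1 < n) (k : Fin 2)
    (hk : (F2 (n-1) i).1 = k ∨ (F2 (n-1) i).2 = k) :
    (if 0 < i then contrib (F2 (n-1) (i-1)) k else 0) ≠
      (if i + 2 < n then contrib (F2 (n-1) (i+1)) k else 0) := by
  rcases Nat.even_or_odd (n-1) with hp' | hp'
  · have hp : (n-1) % 2 = 0 := Nat.even_iff.mp hp'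
    have hc : i % 4 = 0 ∨ i % 4 = 1 ∨ i % 4 = 2 ∨ i % 4 = 3 := by omega
    rcases hc with hr | hr | hr | hr
    · rw [F2_even_lo hp (by omega)] at hk
      rw [if_pos (show i + 2 < n by omega), F2_even_lo hp (show (i+1) % 4 ≤ 1 by omega)]
      rcases Nat.eq_zero_or_pos i with h0 | h0
      · rw [if_neg (by omega)]
        fin_cases k <;> revert hk <;> decide
      · rw [if_pos h0, F2_even_hi hp (show ¬ (i-1) % 4 ≤ 1 by omega)]
        fin_cases k <;> revert hk <;> decide
    · rw [F2_even_lo hp (by omega)] at hk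
      rw [if_pos (show 0 < i by omega), F2_even_lo hp (show (i-1) % 4 ≤ 1 by omega)]
      by_cases hb : i + 2 < n
      · rw [if_pos hb, F2_even_hi hp (show ¬ (i+1) % 4 ≤ 1 by omega)]
        fin_cases k <;> revert hk <;> decide
      · rw [if_neg hb]
        fin_cases k <;> revert hk <;> decide
    · rw [F2_even_hi hp (by omega)] at hk
      rw [if_pos (show 0 < i by omega), F2_even_lo hp (show (i-1) % 4 ≤ 1 by omega),
        if_pos (show i + 2 < n by omega), F2_even_hi hp (show ¬ (i+1) % 4 ≤ 1 by omega)]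
      fin_cases k <;> revert hk <;> decide
    · rw [F2_even_hi hp (by omega)] at hk
      rw [if_pos (show 0 < i by omega), F2_even_hi hp (show ¬ (i-1) % 4 ≤ 1 by omega)]
      by_cases hb : i + 2 < n
      · rw [if_pos hb, F2_even_lo hp (show (i+1) % 4 ≤ 1 by omega)]
        fin_cases k <;> revert hk <;> decide
      · rw [if_neg hb]
        fin_cases k <;> revert hk <;> decide
  · have hp : (n-1) % 2 = 1 := Nat.odd_iff.mp hp'
    have hn4 : 4 ≤ n := by omega
    have hc : i = 0 ∨ i = 1 ∨ i = 2 ∨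
        (3 ≤ i ∧ (i % 4 = 0 ∨ i % 4 = 1 ∨ i % 4 = 2 ∨ i % 4 = 3)) := by omega
    rcases hc with h0 | h1 | h2 | ⟨h3, hr | hr | hr | hr⟩
    · subst h0
      rw [F2_odd0 hp] at hk
      rw [if_neg (by omega), if_pos (show 0 + 2 < n by omega), F2_odd1 hp]
      fin_cases k <;> revert hk <;> decide
    · subst h1
      rw [F2_odd1 hp] at hk
      rw [if_pos (by omega), F2_odd0 hp, if_pos (show 1 + 2 < n by omega), F2_odd2 hp]
      fin_cases k <;> revert hk <;> decide
    · subst h2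
      rw [F2_odd2 hp] at hk
      rw [if_pos (by omega), F2_odd1 hp]
      by_cases hb : 2 + 2 < n
      · rw [if_pos hb, F2_oddA hp (by omega) (by omega)]
        fin_cases k <;> revert hk <;> decide
      · rw [if_neg hb]
        fin_cases k <;> revert hk <;> decide
    · -- i % 4 = 0, i ≥ 4
      rw [F2_oddA hp h3 (Or.inr hr)] at hk
      rw [if_pos (by omega), F2_oddA hp (by omega) (Or.inl (by omega))]
      by_cases hb : i + 2 < n
      · rw [if_pos hb, F2_oddB hp (by omega) (by omega)]
        fin_cases k <;> revert hk <;> decide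
      · rw [if_neg hb]
        fin_cases k <;> revert hk <;> decide
    · -- i % 4 = 1, i ≥ 5
      rw [F2_oddB hp h3 (by omega)] at hk
      rw [if_pos (by omega), F2_oddA hp (by omega) (Or.inr (by omega)),
        if_pos (show i + 2 < n by omega), F2_oddB hp (by omega) (by omega)]
      fin_cases k <;> revert hk <;> decide
    · -- i % 4 = 2, i ≥ 6
      rw [F2_oddB hp h3 (by omega)] at hk
      rw [if_pos (by omega), F2_oddB hp (by omega) (by omega)]
      by_cases hb : i + 2 < n
      · rw [if_pos hb, F2_oddA hp (by omega) (Or.inl (by omega))]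
        fin_cases k <;> revert hk <;> decide
      · rw [if_neg hb]
        fin_cases k <;> revert hk <;> decide
    · -- i % 4 = 3, i ≥ 3
      rw [F2_oddA hp h3 (Or.inl hr)] at hk
      rw [if_pos (show i + 2 < n by omega),
        F2_oddA (i := i + 1) hp (by omega) (Or.inr (by omega)), if_pos (show 0 < i by omega)]
      rcases eq_or_ne i 3 with h33 | h33
      · subst h33
        rw [show (3:ℕ) - 1 = 2 from rfl, F2_odd2 hp]
        fin_cases k <;> revert hk <;> decide
      · rw [F2_oddB hp (by omega) (by omega)]
        fin_cases k <;> revert hk <;> decide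

/-- Turn an edge-index coloring into a coloring of `Sym2 (Fin n)`. -/
def col {n : ℕ} (F : ℕ → Fin 2 × Fin 2) : Sym2 (Fin n) → Fin 2 × Fin 2 :=
  Sym2.lift ⟨fun a b => F (min a.val b.val), fun a b => by dsimp only; rw [min_comm]⟩

lemma col_mk {n : ℕ} (F : ℕ → Fin 2 × Fin 2) (a b : Fin n) :
    col F s(a, b) = F (min a.val b.val) := rfl

lemma deg_eq {n : ℕ} (F : ℕ → Fin 2 × Fin 2) (k : Fin 2) (v : Fin n) :
    degIn2 (pathGraph n) (col F) k v =
      (if 0 < v.val then contrib (F (v.val - 1)) k else 0) +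
      (if v.val + 1 < n then contrib (F v.val) k else 0) := by
  classical
  unfold degIn2
  by_cases h1 : 0 < v.val <;> by_cases h2 : v.val + 1 < n
  · have hs : Finset.univ.filter (fun w => (pathGraph n).Adj v w) =
        {⟨v.val - 1, by omega⟩, ⟨v.val + 1, h2⟩} := by
      ext w
      simp only [Finset.mem_filter, Finset.mem_univ, true_and, Finset.mem_insert,
        Finset.mem_singleton, pathGraph_adj, Fin.ext_iff]
      omega
    rw [hs, Finset.sum_pair (by simp only [ne_eq, Fin.mk.injEq]; omega)]
    rw [if_pos h1, if_pos h2]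
    have e1 : col F s(v, (⟨v.val - 1, by omega⟩ : Fin n)) = F (v.val - 1) := by
      rw [col_mk]; simp only [Fin.val_mk]; congr 1; omega
    have e2 : col F s(v, (⟨v.val + 1, h2⟩ : Fin n)) = F v.val := by
      rw [col_mk]; simp only [Fin.val_mk]; congr 1; omega
    rw [e1, e2]; rfl
  · have hs : Finset.univ.filter (fun w => (pathGraph n).Adj v w) =
        {⟨v.val - 1, by omega⟩} := by
      ext w
      simp only [Finset.mem_filter, Finset.mem_univ, true_and,
        Finset.mem_singleton, pathGraph_adj, Fin.ext_iff]
      omega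
    rw [hs, Finset.sum_singleton, if_pos h1, if_neg h2]
    have e1 : col F s(v, (⟨v.val - 1, by omega⟩ : Fin n)) = F (v.val - 1) := by
      rw [col_mk]; simp only [Fin.val_mk]; congr 1; omega
    rw [e1]; simp [contrib]
  · have hs : Finset.univ.filter (fun w => (pathGraph n).Adj v w) =
        {⟨v.val + 1, h2⟩} := by
      ext w
      simp only [Finset.mem_filter, Finset.mem_univ, true_and,
        Finset.mem_singleton, pathGraph_adj, Fin.ext_iff]
      omega
    rw [hs, Finset.sum_singleton, if_neg h1, if_pos h2]
    have e2 : col F s(v, (⟨v.val + 1, h2⟩ : Fin n)) = F v.val := by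
      rw [col_mk]; simp only [Fin.val_mk]; congr 1; omega
    rw [e2]; simp [contrib]
  · have hs : Finset.univ.filter (fun w => (pathGraph n).Adj v w) = ∅ := by
      ext w
      simp only [Finset.mem_filter, Finset.mem_univ, true_and,
        Finset.notMem_empty, iff_false, pathGraph_adj]
      omega
    rw [hs, if_neg h1, if_neg h2]
    simp

/-- For every path `P_n` with `n ≥ 3`, the doubled multigraph `²P_n` admits a
locally irregular edge coloring with at most 2 colors. -/
theorem stmt_9 (n : ℕ) (hn : 3 ≤ n) :
    ∃ c : Sym2 (Fin n) → Fin 2 × Fin 2, IsLIC2 (pathGraph n) c := by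
  refine ⟨col (F2 (n-1)), ?_⟩
  intro v w hadj k hk
  rw [pathGraph_adj] at hadj
  rcases hadj with h | h
  · -- w = v + 1
    have hi : v.val + 1 < n := by have := w.isLt; omega
    have hcol : col (F2 (n-1)) s(v, w) = F2 (n-1) v.val := by
      rw [col_mk]; congr 1; omega
    rw [hcol] at hk
    have hkey := key n hn v.val hi k hk
    rw [deg_eq, deg_eq]
    rw [if_pos hi]
    have hw1 : (0 : ℕ) < w.val := by omega
    rw [if_pos hw1]
    have hw2 : w.val - 1 = v.val := by omega
    rw [hw2]
    have hw3 : w.val + 1 = v.val + 2 := by omega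
    rw [hw3]
    by_cases hb : v.val + 2 < n
    · rw [if_pos hb] at hkey ⊢
      have hvw : w.val = v.val + 1 := by omega
      rw [hvw]
      omega
    · rw [if_neg hb] at hkey ⊢
      omega
  · -- v = w + 1
    have hi : w.val + 1 < n := by have := v.isLt; omega
    have hcol : col (F2 (n-1)) s(v, w) = F2 (n-1) w.val := by
      rw [col_mk]; congr 1; omega
    rw [hcol] at hk
    have hkey := key n hn w.val hi k hk
    rw [deg_eq, deg_eq]
    rw [if_pos hi]
    have hv1 : (0 : ℕ) < v.val := by omega
    rw [if_pos hv1]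
    have hv2 : v.val - 1 = w.val := by omega
    rw [hv2]
    have hv3 : v.val + 1 = w.val + 2 := by omega
    rw [hv3]
    by_cases hb : w.val + 2 < n
    · rw [if_pos hb] at hkey ⊢
      have hvw : v.val = w.val + 1 := by omega
      rw [hvw]
      omega
    · rw [if_neg hb] at hkey ⊢
      omega
end

section
/- For every cycle C_n with n ≥ 3, the 2-multigraph ²C_n admits a locally irregular edge coloring with at most 2 colors. -/
open Finset SimpleGraph

/-!
Let the doubled edge `{i, i + 1}` of `²C_n` carry `a i ∈ {0, 1, 2}` copies of color `0` and
`2 - a i` copies of color `1`. Then `v` meets `a (v - 1) + a v` edges of color `0` and the other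
`4 - a (v - 1) - a v` edges have color `1`, so the ends of `{v, v + 1}` have different degrees
in both colors as soon as `a (v - 1) ≠ a (v + 1)`. Such a sequence `a` exists for every `n ≥ 3`:
it is a proper 3-coloring of the graph `i ~ i + 2` on `ℤ/n`, a union of cycles.
-/

namespace Fin

variable {n : ℕ}

theorem val_add_one_add_one (v : Fin (n + 2)) :
    (v + 1 + 1).val = if n ≤ v.val then v.val - n else v.val + 2 := by
  have := v.isLt
  rw [val_add_eq_ite, val_add_eq_ite, val_one]
  split_ifs <;> omega

theorem add_one_add_one_ne_self (v : Fin (n + 3)) : v + 1 + 1 ≠ v := by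
  have := v.isLt
  rw [ne_eq, Fin.ext_iff, val_add_one_add_one]
  split_ifs <;> omega

/-- Take `a i = i mod 3`, except that for `n + 3 ≡ 2 [MOD 3]` the last two values become
`2, 0`. -/
theorem exists_fin_three_ne_add_one_add_one :
    ∃ a : Fin (n + 3) → Fin 3, ∀ v, a v ≠ a (v + 1 + 1) := by
  refine ⟨fun v => ⟨(v.val + if n % 3 = 2 ∧ n + 1 ≤ v.val then 2 else 0) % 3,
    Nat.mod_lt _ (by norm_num)⟩, fun v => ?_⟩
  have := v.isLt
  simp only [ne_eq, Fin.ext_iff, val_add_one_add_one]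
  split_ifs <;> omega

theorem sym2_mk_add_one_injective : Function.Injective fun v : Fin (n + 3) => s(v, v + 1) := by
  intro u v huv
  rcases Sym2.eq_iff.1 huv with ⟨h, -⟩ | ⟨rfl, h⟩
  · exact h
  · exact absurd h (add_one_add_one_ne_self v)

end Fin

def pairCount {K : Type*} [DecidableEq K] (k : K) (p : K × K) : ℕ :=
  (if p.1 = k then 1 else 0) + (if p.2 = k then 1 else 0)

def colorPair : Fin 3 → Fin 2 × Fin 2 := ![(1, 1), (0, 1), (0, 0)]

theorem pairCount_colorPair_injective (k : Fin 2) :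
    Function.Injective fun a => pairCount k (colorPair a) := by
  fin_cases k <;> decide

namespace SimpleGraph

variable {n : ℕ}

theorem degIn2_cycleGraph {K : Type*} [DecidableEq K] (c : Sym2 (Fin (n + 3)) → K × K) (k : K)
    (v : Fin (n + 3)) :
    degIn2 (cycleGraph (n + 3)) c k v =
      pairCount k (c s(v - 1, v)) + pairCount k (c s(v, v + 1)) := by
  have hne : v - 1 ≠ v + 1 := by
    have := (Fin.add_one_add_one_ne_self (v - 1)).symm
    rwa [sub_add_cancel] at this
  have hnbr : univ.filter (fun w => (cycleGraph (n + 3)).Adj v w) = {v - 1, v + 1} := by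
    rw [← cycleGraph_neighborFinset]
    ext w
    simp
  rw [degIn2, hnbr, sum_pair hne, Sym2.eq_swap]
  rfl

theorem isLIC2_cycleGraph {c : Sym2 (Fin (n + 3)) → Fin 2 × Fin 2} {a : Fin (n + 3) → Fin 3}
    (hc : ∀ v, c s(v, v + 1) = colorPair (a v)) (ha : ∀ v, a v ≠ a (v + 1 + 1)) :
    IsLIC2 (cycleGraph (n + 3)) c := by
  have ends_differ :
      ∀ v k, degIn2 (cycleGraph (n + 3)) c k v ≠ degIn2 (cycleGraph (n + 3)) c k (v + 1) := by
    intro v k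
    have hprev := hc (v - 1)
    have hsep := ha (v - 1)
    rw [sub_add_cancel] at hprev hsep
    rw [degIn2_cycleGraph, degIn2_cycleGraph, add_sub_cancel_right, hprev, hc, hc]
    have := (pairCount_colorPair_injective k).ne hsep
    omega
  intro v w hvw k _
  rcases cycleGraph_adj.1 hvw with h | h
  · rw [sub_eq_iff_eq_add'] at h
    subst h
    exact (ends_differ w k).symm
  · rw [sub_eq_iff_eq_add'] at h
    subst h
    exact ends_differ v k

end SimpleGraph

/-- For every cycle `C_n` with `n ≥ 3`, the doubled multigraph `²C_n` admits a
locally irregular edge coloring with at most 2 colors. -/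
theorem stmt_10 (n : ℕ) (hn : 3 ≤ n) :
    ∃ c : Sym2 (Fin n) → Fin 2 × Fin 2, IsLIC2 (cycleGraph n) c := by
  obtain ⟨m, rfl⟩ : ∃ m, n = m + 3 := ⟨n - 3, by omega⟩
  obtain ⟨a, ha⟩ := Fin.exists_fin_three_ne_add_one_add_one (n := m)
  exact ⟨Function.extend (fun v => s(v, v + 1)) (colorPair ∘ a) fun _ => (0, 0),
    isLIC2_cycleGraph (fun v => Fin.sym2_mk_add_one_injective.extend_apply _ _ v) ha⟩
end

section
/- For every complete graph K_n with n ≥ 3, the 2-multigraph ²K_n admits a locally irregular edge coloring with at most 2 colors. -/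
open Finset SimpleGraph

/-- number of copies of color 0 on the edge of `²K_n` with endpoint-sum `s`. -/
def gg (n s : ℕ) : ℕ :=
  (if n - 1 ≤ s then 1 else 0) + (if (if n = 3 then 3 else n + 1) ≤ s then 1 else 0)

/-- the pair of colors encoding `a` copies of color `0` (and `2 - a` copies of color `1`). -/
def pp (a : ℕ) : Fin 2 × Fin 2 :=
  if a = 0 then (1, 1) else if a = 1 then (0, 1) else (0, 0)

/-- the coloring of `²K_n`. -/
def cc (n : ℕ) : Sym2 (Fin n) → Fin 2 × Fin 2 :=
  Sym2.lift ⟨fun i j => pp (gg n (i.val + j.val)), fun i j => by simp [Nat.add_comm]⟩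

lemma cc_mk (n : ℕ) (i j : Fin n) : cc n s(i, j) = pp (gg n (i.val + j.val)) := rfl

lemma gg_le (n s : ℕ) : gg n s ≤ 2 := by unfold gg; split_ifs <;> omega

lemma pp0 (a : ℕ) (h : a ≤ 2) :
    (if (pp a).1 = (0 : Fin 2) then (1:ℕ) else 0) + (if (pp a).2 = (0 : Fin 2) then 1 else 0) = a := by
  interval_cases a <;> decide

lemma key_s12 (n v : ℕ) (hn : 3 ≤ n) (hv : v + 2 ≤ n) :
    gg n (2*v+2) + gg n v + 1 ≤ gg n (2*v) + gg n (v+n) := by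
  unfold gg; split_ifs <;> omega

lemma filter_top (n : ℕ) (v : Fin n) :
    (Finset.univ.filter fun w => (⊤ : SimpleGraph (Fin n)).Adj v w) = Finset.univ.erase v := by
  ext w
  simp [top_adj, ne_comm, eq_comm]

lemma deg0_eq (n : ℕ) (v : Fin n) :
    degIn2 (⊤ : SimpleGraph (Fin n)) (cc n) 0 v + gg n (2 * v.val)
      = ∑ t ∈ Finset.range n, gg n (v.val + t) := by
  have h1 : degIn2 (⊤ : SimpleGraph (Fin n)) (cc n) 0 v
      = ∑ w ∈ Finset.univ.erase v, gg n (v.val + w.val) := by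
    unfold degIn2
    rw [filter_top]
    exact Finset.sum_congr rfl fun w _ => by rw [cc_mk]; exact pp0 _ (gg_le n _)
  rw [h1, show gg n (2*v.val) = gg n (v.val + v.val) by rw [two_mul],
    Finset.sum_erase_add _ _ (Finset.mem_univ v)]
  exact Fin.sum_univ_eq_sum_range (fun t => gg n (v.val + t)) n

lemma shift (n v : ℕ) :
    (∑ t ∈ Finset.range n, gg n (v + 1 + t)) + gg n v
      = (∑ t ∈ Finset.range n, gg n (v + t)) + gg n (v + n) := by
  have h1 := Finset.sum_range_succ (fun t => gg n (v + t)) n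
  have h2 := Finset.sum_range_succ' (fun t => gg n (v + t)) n
  have h3 : ∑ t ∈ Finset.range n, gg n (v + (t + 1)) = ∑ t ∈ Finset.range n, gg n (v + 1 + t) :=
    Finset.sum_congr rfl fun t _ => by rw [show v + (t + 1) = v + 1 + t by omega]
  simp only [Nat.add_zero] at h2
  rw [h3] at h2
  rw [h2] at h1
  linarith

lemma cnt_total (x : Fin 2 × Fin 2) :
    ((if x.1 = (0:Fin 2) then (1:ℕ) else 0) + (if x.2 = (0:Fin 2) then 1 else 0)) +
    ((if x.1 = (1:Fin 2) then (1:ℕ) else 0) + (if x.2 = (1:Fin 2) then 1 else 0)) = 2 := by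
  revert x; decide

lemma deg_sum (n : ℕ) (v : Fin n) :
    degIn2 (⊤ : SimpleGraph (Fin n)) (cc n) 0 v + degIn2 (⊤ : SimpleGraph (Fin n)) (cc n) 1 v
      = 2 * (n - 1) := by
  unfold degIn2
  rw [← Finset.sum_add_distrib,
    Finset.sum_congr rfl (fun w _ => cnt_total (cc n s(v, w))),
    Finset.sum_const, smul_eq_mul, filter_top, Finset.card_erase_of_mem (Finset.mem_univ v)]
  simp [mul_comm]

lemma step (n : ℕ) (hn : 3 ≤ n) (a b : Fin n) (hab : b.val = a.val + 1) :
    degIn2 (⊤ : SimpleGraph (Fin n)) (cc n) 0 a < degIn2 (⊤ : SimpleGraph (Fin n)) (cc n) 0 b := by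
  have e1 := deg0_eq n a
  have e2 := deg0_eq n b
  rw [hab, show 2 * (a.val + 1) = 2 * a.val + 2 by omega] at e2
  have e3 := shift n a.val
  have e4 := key_s12 n a.val hn (by have := b.isLt; omega)
  linarith

lemma mono (n : ℕ) (hn : 3 ≤ n) : ∀ a b : Fin n, a.val < b.val →
    degIn2 (⊤ : SimpleGraph (Fin n)) (cc n) 0 a < degIn2 (⊤ : SimpleGraph (Fin n)) (cc n) 0 b := by
  intro a b h
  obtain ⟨k, hk⟩ : ∃ k, b.val = a.val + k + 1 := ⟨b.val - a.val - 1, by omega⟩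
  clear h
  induction k generalizing b with
  | zero => exact step n hn a b (by omega)
  | succ k ih =>
      have hm : a.val + k + 1 < n := by have := b.isLt; omega
      exact lt_trans (ih ⟨a.val + k + 1, hm⟩ rfl) (step n hn _ b (by simp; omega))


/-- For every complete graph `K_n` with `n ≥ 3`, the doubled multigraph `²K_n` admits a
locally irregular edge coloring with at most 2 colors. -/
theorem stmt_12 (n : ℕ) (hn : 3 ≤ n) :
    ∃ c : Sym2 (Fin n) → Fin 2 × Fin 2, IsLIC2 (⊤ : SimpleGraph (Fin n)) c := by
  refine ⟨cc n, ?_⟩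
  intro v w hvw k _
  have hne : v ≠ w := hvw.ne
  have hvals : v.val ≠ w.val := fun h => hne (Fin.ext h)
  have hs1 := deg_sum n v
  have hs2 := deg_sum n w
  have hk : k = 0 ∨ k = 1 := by omega
  rcases hk with rfl | rfl
  · rcases hvals.lt_or_gt with h | h
    · exact (mono n hn v w h).ne
    · exact (mono n hn w v h).ne'
  · rcases hvals.lt_or_gt with h | h
    · have := mono n hn v w h; intro hEq; linarith
    · have := mono n hn w v h; intro hEq; linarith
end

section
/- The only rooted-tree branches that are not locally irregular are: the path P_4 rooted at an internal vertex, the path P_4 rooted at an endpoint, and the path P_5 rooted at its central vertex; every other branch (as defined) is a locally irregular graph. -/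
open SimpleGraph

variable {V : Type*}

/-- The children (sons) of `x` in the tree `T` rooted at `r`. -/
def children (T : SimpleGraph V) (r x : V) : Set V :=
  {w | T.Adj x w ∧ T.dist r w = T.dist r x + 1}

/-- A leaf of a graph: a vertex with exactly one neighbor. -/
def IsLeaf (T : SimpleGraph V) (v : V) : Prop := ∃ u, T.neighborSet v = {u}

/-- The edges from `y` to all its sons, together with, for each son `x_j` having a unique
son `x'_j` which is a leaf, the edge `x_j x'_j`. -/
def grandEdges (T : SimpleGraph V) (r y : V) : Set (Sym2 V) :=
  {e | ∃ w ∈ children T r y, e = s(y, w)} ∪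
  {e | ∃ w ∈ children T r y, ∃ w', children T r w = {w'} ∧ IsLeaf T w' ∧ e = s(w, w')}

/-- The edge set of the branch `B(x)` of the tree `T` rooted at `r`:
if `x` has a single son `x₀` it consists of the edge `x x₀` together with `grandEdges` at `x₀`;
if `x` has more than one son it is `grandEdges` at `x`. -/
def branchEdges (T : SimpleGraph V) (r x : V) : Set (Sym2 V) :=
  {e | (∃ x0, children T r x = {x0} ∧ (e = s(x, x0) ∨ e ∈ grandEdges T r x0)) ∨
       (1 < (children T r x).ncard ∧ e ∈ grandEdges T r x)}

/-- Degree of `v` in a set of edges. -/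
noncomputable def degE (E : Set (Sym2 V)) (v : V) : ℕ := {e ∈ E | v ∈ e}.ncard

/-- A set of edges is locally irregular if the endpoints of each of its edges have
distinct degrees. -/
def LocIrregE (E : Set (Sym2 V)) : Prop :=
  ∀ v w, v ≠ w → s(v, w) ∈ E → degE E v ≠ degE E w

lemma child_dist {T : SimpleGraph V} {r y w : V} (h : w ∈ children T r y) :
    T.dist r w = T.dist r y + 1 := h.2

lemma mem_children_of_eq {T : SimpleGraph V} {r w w' : V} (h : children T r w = {w'}) :
    w' ∈ children T r w := by rw [h]; rfl

lemma parent_unique {T : SimpleGraph V} (hT : T.IsTree) {r w y1 y2 : V}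
    (h1 : w ∈ children T r y1) (h2 : w ∈ children T r y2) : y1 = y2 := by
  obtain ⟨ha1, hd1⟩ := h1
  obtain ⟨ha2, hd2⟩ := h2
  obtain ⟨p1, _, hl1⟩ := hT.isConnected.exists_path_of_dist r y1
  obtain ⟨p2, _, hl2⟩ := hT.isConnected.exists_path_of_dist r y2
  have hq1 : (p1.concat ha1).IsPath := by
    apply Walk.isPath_of_length_eq_dist
    rw [Walk.length_concat, hl1, hd1]
  have hq2 : (p2.concat ha2).IsPath := by
    apply Walk.isPath_of_length_eq_dist
    rw [Walk.length_concat, hl2, hd2]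
  have h := hT.IsAcyclic.path_unique ⟨p1.concat ha1, hq1⟩ ⟨p2.concat ha2, hq2⟩
  obtain ⟨hv, -⟩ := Walk.concat_inj (Subtype.ext_iff.mp h)
  exact hv

lemma notMem_grand_low {T : SimpleGraph V} {r y v : V} {e : Sym2 V}
    (hv : T.dist r v < T.dist r y) (he : e ∈ grandEdges T r y) : v ∉ e := by
  rcases he with ⟨w, hw, rfl⟩ | ⟨w, hw, w', hw', -, rfl⟩
  · have hd := child_dist hw
    intro hv'
    rcases Sym2.mem_iff.mp hv' with rfl | rfl <;> omega
  · have hd := child_dist hw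
    have hd' := child_dist (mem_children_of_eq hw')
    intro hv'
    rcases Sym2.mem_iff.mp hv' with rfl | rfl <;> omega

lemma sep_grand_low {T : SimpleGraph V} {r y v : V} (hv : T.dist r v < T.dist r y) :
    {e ∈ grandEdges T r y | v ∈ e} = ∅ := by
  ext e
  simp only [Set.mem_setOf_eq, Set.mem_empty_iff_false, iff_false, not_and]
  exact fun he => notMem_grand_low hv he

lemma sep_grand_root {T : SimpleGraph V} {r y : V} :
    {e ∈ grandEdges T r y | y ∈ e} = (fun w => s(y, w)) '' children T r y := by
  ext e
  constructor
  · rintro ⟨⟨w, hw, rfl⟩ | ⟨w, hw, w', hw', -, rfl⟩, hy⟩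
    · exact ⟨w, hw, rfl⟩
    · exfalso
      have hd := child_dist hw
      have hd' := child_dist (mem_children_of_eq hw')
      rcases Sym2.mem_iff.mp hy with rfl | rfl <;> omega
  · rintro ⟨w, hw, rfl⟩
    exact ⟨Or.inl ⟨w, hw, rfl⟩, by simp⟩

lemma sep_grand_child {T : SimpleGraph V} {r y w : V} (hw : w ∈ children T r y)
    (hnp : ∀ w', ¬ (children T r w = {w'} ∧ IsLeaf T w')) :
    {e ∈ grandEdges T r y | w ∈ e} = {s(y, w)} := by
  ext e
  constructor
  · rintro ⟨⟨w2, hw2, rfl⟩ | ⟨w2, hw2, w2', hw2', hl2, rfl⟩, hmem⟩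
    · have hd := child_dist hw
      have hd2 := child_dist hw2
      rcases Sym2.mem_iff.mp hmem with rfl | rfl
      · omega
      · rfl
    · have hd := child_dist hw
      have hd2 := child_dist hw2
      have hd2' := child_dist (mem_children_of_eq hw2')
      rcases Sym2.mem_iff.mp hmem with rfl | rfl
      · exact absurd ⟨hw2', hl2⟩ (hnp w2')
      · omega
  · rintro rfl
    exact ⟨Or.inl ⟨w, hw, rfl⟩, by simp⟩

lemma sep_grand_child_pend {T : SimpleGraph V} {r y w w' : V} (hw : w ∈ children T r y)
    (hp : children T r w = {w'}) (hl : IsLeaf T w') :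
    {e ∈ grandEdges T r y | w ∈ e} = {s(y, w), s(w, w')} := by
  ext e
  constructor
  · rintro ⟨⟨w2, hw2, rfl⟩ | ⟨w2, hw2, w2', hw2', hl2, rfl⟩, hmem⟩
    · have hd := child_dist hw
      have hd2 := child_dist hw2
      rcases Sym2.mem_iff.mp hmem with rfl | rfl
      · omega
      · exact Or.inl rfl
    · have hd := child_dist hw
      have hd2 := child_dist hw2
      have hd2' := child_dist (mem_children_of_eq hw2')
      rcases Sym2.mem_iff.mp hmem with rfl | rfl
      · rw [hp] at hw2'
        have : w' = w2' := by
          have := Set.singleton_eq_singleton_iff.mp hw2'; exact this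
        subst this
        exact Or.inr rfl
      · omega
  · rintro (rfl | rfl)
    · exact ⟨Or.inl ⟨w, hw, rfl⟩, by simp⟩
    · exact ⟨Or.inr ⟨w, hw, w', hp, hl, rfl⟩, by simp⟩

lemma sep_grand_pend {T : SimpleGraph V} (hT : T.IsTree) {r y w w' : V}
    (hw : w ∈ children T r y) (hp : children T r w = {w'}) (hl : IsLeaf T w') :
    {e ∈ grandEdges T r y | w' ∈ e} = {s(w, w')} := by
  have hd := child_dist hw
  have hd' := child_dist (mem_children_of_eq hp)
  ext e
  constructor
  · rintro ⟨⟨w2, hw2, rfl⟩ | ⟨w2, hw2, w2', hw2', hl2, rfl⟩, hmem⟩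
    · have hd2 := child_dist hw2
      rcases Sym2.mem_iff.mp hmem with rfl | rfl <;> omega
    · have hd2 := child_dist hw2
      have hd2' := child_dist (mem_children_of_eq hw2')
      rcases Sym2.mem_iff.mp hmem with rfl | rfl
      · omega
      · have : w2 = w := parent_unique hT (mem_children_of_eq hw2') (mem_children_of_eq hp)
        subst this
        rfl
  · rintro rfl
    exact ⟨Or.inr ⟨w, hw, w', hp, hl, rfl⟩, by simp⟩

lemma grand_one_pend {T : SimpleGraph V} {r y w w' : V} (hC : children T r y = {w})
    (hp : children T r w = {w'}) (hl : IsLeaf T w') :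
    grandEdges T r y = {s(y, w), s(w, w')} := by
  ext e
  constructor
  · rintro (⟨w2, hw2, rfl⟩ | ⟨w2, hw2, w2', hw2', hl2, rfl⟩)
    · rw [hC] at hw2; rcases hw2 with rfl
      exact Or.inl rfl
    · rw [hC] at hw2; rcases hw2 with rfl
      rw [hp] at hw2'
      rcases Set.singleton_eq_singleton_iff.mp hw2' with rfl
      exact Or.inr rfl
  · rintro (rfl | rfl)
    · exact Or.inl ⟨w, by rw [hC]; rfl, rfl⟩
    · exact Or.inr ⟨w, by rw [hC]; rfl, w', hp, hl, rfl⟩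

lemma grand_two_one {T : SimpleGraph V} {r y w1 w2 w1' : V}
    (hC : children T r y = {w1, w2}) (hp1 : children T r w1 = {w1'}) (hl1 : IsLeaf T w1')
    (hnp2 : ∀ u, ¬ (children T r w2 = {u} ∧ IsLeaf T u)) :
    grandEdges T r y = {s(y, w1), s(y, w2), s(w1, w1')} := by
  ext e
  constructor
  · rintro (⟨u, hu, rfl⟩ | ⟨u, hu, u', hu', hlu, rfl⟩)
    · rw [hC] at hu
      rcases hu with rfl | rfl
      · exact Or.inl rfl
      · exact Or.inr (Or.inl rfl)
    · rw [hC] at hu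
      rcases hu with rfl | rfl
      · rw [hp1] at hu'
        rcases Set.singleton_eq_singleton_iff.mp hu' with rfl
        exact Or.inr (Or.inr rfl)
      · exact absurd ⟨hu', hlu⟩ (hnp2 u')
  · rintro (rfl | rfl | rfl)
    · exact Or.inl ⟨w1, by rw [hC]; exact Or.inl rfl, rfl⟩
    · exact Or.inl ⟨w2, by rw [hC]; exact Or.inr rfl, rfl⟩
    · exact Or.inr ⟨w1, by rw [hC]; exact Or.inl rfl, w1', hp1, hl1, rfl⟩

lemma grand_two_pend {T : SimpleGraph V} {r y w1 w2 w1' w2' : V}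
    (hC : children T r y = {w1, w2}) (hp1 : children T r w1 = {w1'}) (hl1 : IsLeaf T w1')
    (hp2 : children T r w2 = {w2'}) (hl2 : IsLeaf T w2') :
    grandEdges T r y = {s(y, w1), s(y, w2), s(w1, w1'), s(w2, w2')} := by
  ext e
  constructor
  · rintro (⟨u, hu, rfl⟩ | ⟨u, hu, u', hu', hlu, rfl⟩)
    · rw [hC] at hu
      rcases hu with rfl | rfl
      · exact Or.inl rfl
      · exact Or.inr (Or.inl rfl)
    · rw [hC] at hu
      rcases hu with rfl | rfl
      · rw [hp1] at hu'
        rcases Set.singleton_eq_singleton_iff.mp hu' with rfl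
        exact Or.inr (Or.inr (Or.inl rfl))
      · rw [hp2] at hu'
        rcases Set.singleton_eq_singleton_iff.mp hu' with rfl
        exact Or.inr (Or.inr (Or.inr rfl))
  · rintro (rfl | rfl | rfl | rfl)
    · exact Or.inl ⟨w1, by rw [hC]; exact Or.inl rfl, rfl⟩
    · exact Or.inl ⟨w2, by rw [hC]; exact Or.inr rfl, rfl⟩
    · exact Or.inr ⟨w1, by rw [hC]; exact Or.inl rfl, w1', hp1, hl1, rfl⟩
    · exact Or.inr ⟨w2, by rw [hC]; exact Or.inr rfl, w2', hp2, hl2, rfl⟩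

lemma children_finite_of_grand {T : SimpleGraph V} {r y : V}
    (hfin : (grandEdges T r y).Finite) : (children T r y).Finite := by
  have hsub : (fun w => s(y, w)) '' children T r y ⊆ grandEdges T r y := by
    rintro e ⟨w, hw, rfl⟩
    exact Or.inl ⟨w, hw, rfl⟩
  have hinj : Function.Injective fun w => s(y, w) := fun a b h => Sym2.congr_right.mp h
  exact Set.Finite.of_finite_image (hfin.subset hsub) hinj.injOn

lemma sep_insert_mem {a : Sym2 V} {G : Set (Sym2 V)} {v : V} (hv : v ∈ a) :
    {e ∈ insert a G | v ∈ e} = insert a {e ∈ G | v ∈ e} := by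
  ext e; aesop

lemma sep_insert_notMem {a : Sym2 V} {G : Set (Sym2 V)} {v : V} (hv : v ∉ a) :
    {e ∈ insert a G | v ∈ e} = {e ∈ G | v ∈ e} := by
  ext e; aesop


lemma degE_eq_pair {E : Set (Sym2 V)} {v : V} {e1 e2 : Sym2 V}
    (h : {e ∈ E | v ∈ e} = {e1, e2}) (hne : e1 ≠ e2) : degE E v = 2 := by
  rw [degE, h, Set.ncard_pair hne]

lemma notLI1 {x a b c : V} (h : [x, a, b, c].Pairwise (· ≠ ·)) :
    ¬ LocIrregE ({s(x, a), s(a, b), s(b, c)} : Set (Sym2 V)) := by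
  simp only [List.pairwise_cons, List.mem_cons, List.not_mem_nil, or_false, forall_eq_or_imp,
    forall_eq, List.Pairwise.nil, and_true] at h
  obtain ⟨⟨hxa, hxb, hxc⟩, ⟨hab, hac⟩, hbc⟩ := h
  intro H
  apply H a b hab (by simp)
  have h1 : degE ({s(x, a), s(a, b), s(b, c)} : Set (Sym2 V)) a = 2 := by
    apply degE_eq_pair (e1 := s(x, a)) (e2 := s(a, b))
    · ext e
      simp only [Set.mem_setOf_eq, Set.mem_insert_iff, Set.mem_singleton_iff]
      constructor
      · rintro ⟨rfl | rfl | rfl, hm⟩ <;> rcases Sym2.mem_iff.mp hm with h' | h' <;> tauto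
      · rintro (rfl | rfl) <;> exact ⟨by tauto, by simp⟩
    · simp only [ne_eq, Sym2.eq_iff]; tauto
  have h2 : degE ({s(x, a), s(a, b), s(b, c)} : Set (Sym2 V)) b = 2 := by
    apply degE_eq_pair (e1 := s(a, b)) (e2 := s(b, c))
    · ext e
      simp only [Set.mem_setOf_eq, Set.mem_insert_iff, Set.mem_singleton_iff]
      constructor
      · rintro ⟨rfl | rfl | rfl, hm⟩ <;> rcases Sym2.mem_iff.mp hm with h' | h' <;> tauto
      · rintro (rfl | rfl) <;> exact ⟨by tauto, by simp⟩
    · simp only [ne_eq, Sym2.eq_iff]; tauto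
  rw [h1, h2]

lemma notLI2 {x a b c : V} (h : [a, x, b, c].Pairwise (· ≠ ·)) :
    ¬ LocIrregE ({s(a, x), s(x, b), s(b, c)} : Set (Sym2 V)) := by
  simp only [List.pairwise_cons, List.mem_cons, List.not_mem_nil, or_false, forall_eq_or_imp,
    forall_eq, List.Pairwise.nil, and_true] at h
  obtain ⟨⟨hax, hab, hac⟩, ⟨hxb, hxc⟩, hbc⟩ := h
  intro H
  apply H x b hxb (by simp)
  have h1 : degE ({s(a, x), s(x, b), s(b, c)} : Set (Sym2 V)) x = 2 := by
    apply degE_eq_pair (e1 := s(a, x)) (e2 := s(x, b))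
    · ext e
      simp only [Set.mem_setOf_eq, Set.mem_insert_iff, Set.mem_singleton_iff]
      constructor
      · rintro ⟨rfl | rfl | rfl, hm⟩ <;> rcases Sym2.mem_iff.mp hm with h' | h' <;> tauto
      · rintro (rfl | rfl) <;> exact ⟨by tauto, by simp⟩
    · simp only [ne_eq, Sym2.eq_iff]; tauto
  have h2 : degE ({s(a, x), s(x, b), s(b, c)} : Set (Sym2 V)) b = 2 := by
    apply degE_eq_pair (e1 := s(x, b)) (e2 := s(b, c))
    · ext e
      simp only [Set.mem_setOf_eq, Set.mem_insert_iff, Set.mem_singleton_iff]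
      constructor
      · rintro ⟨rfl | rfl | rfl, hm⟩ <;> rcases Sym2.mem_iff.mp hm with h' | h' <;> tauto
      · rintro (rfl | rfl) <;> exact ⟨by tauto, by simp⟩
    · simp only [ne_eq, Sym2.eq_iff]; tauto
  rw [h1, h2]

lemma notLI3 {x a b c d : V} (h : [a, b, x, c, d].Pairwise (· ≠ ·)) :
    ¬ LocIrregE ({s(a, b), s(b, x), s(x, c), s(c, d)} : Set (Sym2 V)) := by
  simp only [List.pairwise_cons, List.mem_cons, List.not_mem_nil, or_false, forall_eq_or_imp,
    forall_eq, List.Pairwise.nil, and_true] at h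
  obtain ⟨⟨hab, hax, hac, had⟩, ⟨hbx, hbc, hbd⟩, ⟨hxc, hxd⟩, hcd⟩ := h
  intro H
  apply H x c hxc (by simp)
  have h1 : degE ({s(a, b), s(b, x), s(x, c), s(c, d)} : Set (Sym2 V)) x = 2 := by
    apply degE_eq_pair (e1 := s(b, x)) (e2 := s(x, c))
    · ext e
      simp only [Set.mem_setOf_eq, Set.mem_insert_iff, Set.mem_singleton_iff]
      constructor
      · rintro ⟨rfl | rfl | rfl | rfl, hm⟩ <;> rcases Sym2.mem_iff.mp hm with h' | h' <;> tauto
      · rintro (rfl | rfl) <;> exact ⟨by tauto, by simp⟩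
    · simp only [ne_eq, Sym2.eq_iff]; tauto
  have h2 : degE ({s(a, b), s(b, x), s(x, c), s(c, d)} : Set (Sym2 V)) c = 2 := by
    apply degE_eq_pair (e1 := s(x, c)) (e2 := s(c, d))
    · ext e
      simp only [Set.mem_setOf_eq, Set.mem_insert_iff, Set.mem_singleton_iff]
      constructor
      · rintro ⟨rfl | rfl | rfl | rfl, hm⟩ <;> rcases Sym2.mem_iff.mp hm with h' | h' <;> tauto
      · rintro (rfl | rfl) <;> exact ⟨by tauto, by simp⟩
    · simp only [ne_eq, Sym2.eq_iff]; tauto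
  rw [h1, h2]


/-- A branch of a rooted tree (it always has at least two edges) fails to be locally
irregular precisely when it is a path `P₄` rooted at an endpoint, a path `P₄` rooted at an
internal vertex, or a path `P₅` rooted at its central vertex. -/
theorem stmt_14 (T : SimpleGraph V) (hT : T.IsTree) (r x : V)
    (h2 : 2 ≤ (branchEdges T r x).ncard) :
    ¬ LocIrregE (branchEdges T r x) ↔
      (∃ a b c : V, [x, a, b, c].Pairwise (· ≠ ·) ∧
        branchEdges T r x = {s(x, a), s(a, b), s(b, c)}) ∨
      (∃ a b c : V, [a, x, b, c].Pairwise (· ≠ ·) ∧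
        branchEdges T r x = {s(a, x), s(x, b), s(b, c)}) ∨
      (∃ a b c d : V, [a, b, x, c, d].Pairwise (· ≠ ·) ∧
        branchEdges T r x = {s(a, b), s(b, x), s(x, c), s(c, d)}) := by
  classical
  constructor
  · intro hnl

    classical
    have hEfin : (branchEdges T r x).Finite := by
      by_contra hinf
      have := Set.Infinite.ncard hinf
      omega
    obtain ⟨e0, he0⟩ : (branchEdges T r x).Nonempty :=
      Set.nonempty_of_ncard_ne_zero (by omega)
    rcases he0 with ⟨x0, hx0, -⟩ | ⟨hk, -⟩
    · -- Case A : single son x0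
      have hxx0 : x0 ∈ children T r x := by rw [hx0]; rfl
      have hd0 : T.dist r x0 = T.dist r x + 1 := hxx0.2
      have hE : branchEdges T r x = insert s(x, x0) (grandEdges T r x0) := by
        ext e
        constructor
        · rintro (⟨y, hy, h⟩ | ⟨hgt, -⟩)
          · rw [hx0] at hy
            rcases Set.singleton_eq_singleton_iff.mp hy with rfl
            rcases h with rfl | h
            · exact Set.mem_insert _ _
            · exact Set.mem_insert_of_mem _ h
          · rw [hx0, Set.ncard_singleton] at hgt; omega
        · rintro (rfl | h)
          · exact Or.inl ⟨x0, hx0, Or.inl rfl⟩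
          · exact Or.inl ⟨x0, hx0, Or.inr h⟩
      have hGfin : (grandEdges T r x0).Finite :=
        (hE ▸ hEfin).subset (Set.subset_insert _ _)
      have hCfin : (children T r x0).Finite := children_finite_of_grand hGfin
      have hCne : (children T r x0).Nonempty := by
        rcases Set.eq_empty_or_nonempty (children T r x0) with hemp | hne
        · exfalso
          have hG : grandEdges T r x0 = ∅ := by
            ext e
            simp [grandEdges, hemp]
          rw [hE, hG] at h2
          simp at h2
        · exact hne
      have hCpos : 0 < (children T r x0).ncard := (Set.ncard_pos hCfin).mpr hCne
      have hinj : Function.Injective fun w => s(x0, w) := fun a b h => Sym2.congr_right.mp h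
      -- degrees
      have hdegx : degE (insert s(x, x0) (grandEdges T r x0)) x = 1 := by
        rw [degE, sep_insert_mem (by simp), sep_grand_low (show T.dist r x < T.dist r x0 by omega)]
        simp
      have hdegx0 : degE (insert s(x, x0) (grandEdges T r x0)) x0
          = (children T r x0).ncard + 1 := by
        rw [degE, sep_insert_mem (by simp), sep_grand_root]
        have hnm : s(x, x0) ∉ (fun w => s(x0, w)) '' children T r x0 := by
          rintro ⟨w, hw, hq⟩
          have hdw := child_dist hw
          rcases Sym2.eq_iff.mp hq with ⟨h1, -⟩ | ⟨-, h1⟩ <;>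
            · have := congrArg (T.dist r) h1; omega
        rw [Set.ncard_insert_of_notMem hnm (hCfin.image _),
          Set.ncard_image_of_injective _ hinj]
      have hwnm : ∀ w ∈ children T r x0, (w : V) ∉ s(x, x0) := by
        intro w hw hmem
        have hdw := child_dist hw
        rcases Sym2.mem_iff.mp hmem with rfl | rfl <;> omega
      rw [hE] at hnl
      unfold LocIrregE at hnl
      push_neg at hnl
      obtain ⟨v, w, hvw, hmem, heq⟩ := hnl
      rcases hmem with hq | hg
      · exfalso
        have hnew : degE (insert s(x, x0) (grandEdges T r x0)) x
            = degE (insert s(x, x0) (grandEdges T r x0)) x0 := by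
          rcases Sym2.eq_iff.mp hq with ⟨rfl, rfl⟩ | ⟨rfl, rfl⟩
          · exact heq
          · exact heq.symm
        rw [hdegx, hdegx0] at hnew
        omega
      · rcases hg with ⟨wc, hwc, hq⟩ | ⟨wc, hwc, wc', hpc, hlc, hq⟩
        · -- edge from x0 to a child wc
          have hdwc := child_dist hwc
          have hnew : degE (insert s(x, x0) (grandEdges T r x0)) x0
              = degE (insert s(x, x0) (grandEdges T r x0)) wc := by
            rcases Sym2.eq_iff.mp hq with ⟨rfl, rfl⟩ | ⟨rfl, rfl⟩
            · exact heq
            · exact heq.symm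
          by_cases hpend : ∃ u, children T r wc = {u} ∧ IsLeaf T u
          · obtain ⟨wc', hpc, hlc⟩ := hpend
            have hdwc' := child_dist (mem_children_of_eq hpc)
            have hdeg2 : degE (insert s(x, x0) (grandEdges T r x0)) wc = 2 := by
              rw [degE, sep_insert_notMem (hwnm wc hwc), sep_grand_child_pend hwc hpc hlc]
              refine Set.ncard_pair ?_
              intro hq2
              rcases Sym2.eq_iff.mp hq2 with ⟨h1, -⟩ | ⟨h1, -⟩ <;>
                · have := congrArg (T.dist r) h1; omega
            rw [hdegx0, hdeg2] at hnew
            have hC1 : children T r x0 = {wc} := by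
              obtain ⟨a, hCa⟩ := Set.ncard_eq_one.mp (show (children T r x0).ncard = 1 by omega)
              have : wc = a := by rw [hCa] at hwc; exact hwc
              rw [hCa, this]
            left
            refine ⟨x0, wc, wc', ?_, ?_⟩
            · simp only [List.pairwise_cons, List.mem_cons, List.not_mem_nil, or_false,
                forall_eq_or_imp, forall_eq, List.Pairwise.nil, and_true, false_implies,
                implies_true]
              refine ⟨⟨?_, ?_, ?_⟩, ⟨?_, ?_⟩, ?_⟩ <;> (rintro rfl; omega)
            · rw [hE, grand_one_pend hC1 hpc hlc]
          · have hdeg1 : degE (insert s(x, x0) (grandEdges T r x0)) wc = 1 := by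
              rw [degE, sep_insert_notMem (hwnm wc hwc),
                sep_grand_child hwc (fun u hu => hpend ⟨u, hu⟩), Set.ncard_singleton]
            rw [hdegx0, hdeg1] at hnew
            omega
        · -- pendant edge
          exfalso
          have hdwc := child_dist hwc
          have hdwc' := child_dist (mem_children_of_eq hpc)
          have hnew : degE (insert s(x, x0) (grandEdges T r x0)) wc
              = degE (insert s(x, x0) (grandEdges T r x0)) wc' := by
            rcases Sym2.eq_iff.mp hq with ⟨rfl, rfl⟩ | ⟨rfl, rfl⟩
            · exact heq
            · exact heq.symm
          have hdeg2 : degE (insert s(x, x0) (grandEdges T r x0)) wc = 2 := by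
            rw [degE, sep_insert_notMem (hwnm wc hwc), sep_grand_child_pend hwc hpc hlc]
            refine Set.ncard_pair ?_
            intro hq2
            rcases Sym2.eq_iff.mp hq2 with ⟨h1, -⟩ | ⟨h1, -⟩ <;>
              · have := congrArg (T.dist r) h1; omega
          have hdeg1 : degE (insert s(x, x0) (grandEdges T r x0)) wc' = 1 := by
            have hnm : (wc' : V) ∉ s(x, x0) := by
              intro hmem'
              rcases Sym2.mem_iff.mp hmem' with rfl | rfl <;> omega
            rw [degE, sep_insert_notMem hnm, sep_grand_pend hT hwc hpc hlc,
              Set.ncard_singleton]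
          rw [hdeg2, hdeg1] at hnew
          omega
    · -- Case B: several sons
      have hE : branchEdges T r x = grandEdges T r x := by
        ext e
        constructor
        · rintro (⟨x0, hx0, h⟩ | ⟨-, h⟩)
          · rw [hx0, Set.ncard_singleton] at hk; omega
          · exact h
        · exact fun h => Or.inr ⟨hk, h⟩
      have hGfin : (grandEdges T r x).Finite := hE ▸ hEfin
      have hKfin : (children T r x).Finite := children_finite_of_grand hGfin
      have hinj : Function.Injective fun w => s(x, w) := fun a b h => Sym2.congr_right.mp h
      have hdegx : degE (grandEdges T r x) x = (children T r x).ncard := by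
        rw [degE, sep_grand_root, Set.ncard_image_of_injective _ hinj]
      rw [hE] at hnl
      unfold LocIrregE at hnl
      push_neg at hnl
      obtain ⟨v, w, hvw, hmem, heq⟩ := hnl
      rcases hmem with ⟨wc, hwc, hq⟩ | ⟨wc, hwc, wc', hpc, hlc, hq⟩
      · have hdwc := child_dist hwc
        have hnew : degE (grandEdges T r x) x = degE (grandEdges T r x) wc := by
          rcases Sym2.eq_iff.mp hq with ⟨rfl, rfl⟩ | ⟨rfl, rfl⟩
          · exact heq
          · exact heq.symm
        by_cases hpend : ∃ u, children T r wc = {u} ∧ IsLeaf T u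
        · obtain ⟨wc', hpc, hlc⟩ := hpend
          have hdwc' := child_dist (mem_children_of_eq hpc)
          have hdeg2 : degE (grandEdges T r x) wc = 2 := by
            rw [degE, sep_grand_child_pend hwc hpc hlc]
            refine Set.ncard_pair ?_
            intro hq2
            rcases Sym2.eq_iff.mp hq2 with ⟨h1, -⟩ | ⟨h1, -⟩ <;>
              · have := congrArg (T.dist r) h1; omega
          rw [hdegx, hdeg2] at hnew
          obtain ⟨w2, hw2ne, hK⟩ : ∃ w2, wc ≠ w2 ∧ children T r x = {wc, w2} := by
            obtain ⟨a, b, hab, hKab⟩ :=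
              Set.ncard_eq_two.mp (show (children T r x).ncard = 2 by omega)
            have hwcm : wc ∈ ({a, b} : Set V) := by rw [← hKab]; exact hwc
            rcases hwcm with rfl | rfl
            · exact ⟨b, hab, hKab⟩
            · exact ⟨a, fun h => hab h.symm, by rw [hKab, Set.pair_comm]⟩
          have hw2K : w2 ∈ children T r x := by rw [hK]; exact Or.inr rfl
          have hdw2 := child_dist hw2K
          by_cases hpend2 : ∃ u, children T r w2 = {u} ∧ IsLeaf T u
          · obtain ⟨w2', hp2, hl2⟩ := hpend2
            have hdw2' := child_dist (mem_children_of_eq hp2)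
            right; right
            refine ⟨w2', w2, wc, wc', ?_, ?_⟩
            · simp only [List.pairwise_cons, List.mem_cons, List.not_mem_nil, or_false,
                forall_eq_or_imp, forall_eq, List.Pairwise.nil, and_true, false_implies,
                implies_true]
              refine ⟨⟨?_, ?_, ?_, ?_⟩, ⟨?_, ?_, ?_⟩, ⟨?_, ?_⟩, ?_⟩
              · rintro rfl; omega
              · rintro rfl; omega
              · rintro rfl; omega
              · rintro rfl
                exact hw2ne (parent_unique hT (mem_children_of_eq hpc) (mem_children_of_eq hp2))
              · rintro rfl; omega
              · exact fun h => hw2ne h.symm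
              · rintro rfl; omega
              · rintro rfl; omega
              · rintro rfl; omega
              · rintro rfl; omega
            · rw [hE, grand_two_pend hK hpc hlc hp2 hl2,
                show s(w2', w2) = s(w2, w2') from Sym2.eq_swap,
                show s(w2, x) = s(x, w2) from Sym2.eq_swap]
              ext e
              simp only [Set.mem_insert_iff, Set.mem_singleton_iff]
              tauto
          · right; left
            refine ⟨w2, wc, wc', ?_, ?_⟩
            · simp only [List.pairwise_cons, List.mem_cons, List.not_mem_nil, or_false,
                forall_eq_or_imp, forall_eq, List.Pairwise.nil, and_true, false_implies,
                implies_true]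
              refine ⟨⟨?_, ?_, ?_⟩, ⟨?_, ?_⟩, ?_⟩
              · rintro rfl; omega
              · exact fun h => hw2ne h.symm
              · rintro rfl; omega
              · rintro rfl; omega
              · rintro rfl; omega
              · rintro rfl; omega
            · rw [hE, grand_two_one hK hpc hlc (fun u hu => hpend2 ⟨u, hu⟩),
                show s(w2, x) = s(x, w2) from Sym2.eq_swap]
              ext e
              simp only [Set.mem_insert_iff, Set.mem_singleton_iff]
              tauto
        · have hdeg1 : degE (grandEdges T r x) wc = 1 := by
            rw [degE, sep_grand_child hwc (fun u hu => hpend ⟨u, hu⟩), Set.ncard_singleton]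
          rw [hdegx, hdeg1] at hnew
          omega
      · exfalso
        have hdwc := child_dist hwc
        have hdwc' := child_dist (mem_children_of_eq hpc)
        have hnew : degE (grandEdges T r x) wc = degE (grandEdges T r x) wc' := by
          rcases Sym2.eq_iff.mp hq with ⟨rfl, rfl⟩ | ⟨rfl, rfl⟩
          · exact heq
          · exact heq.symm
        have hdeg2 : degE (grandEdges T r x) wc = 2 := by
          rw [degE, sep_grand_child_pend hwc hpc hlc]
          refine Set.ncard_pair ?_
          intro hq2
          rcases Sym2.eq_iff.mp hq2 with ⟨h1, -⟩ | ⟨h1, -⟩ <;>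
            · have := congrArg (T.dist r) h1; omega
        have hdeg1 : degE (grandEdges T r x) wc' = 1 := by
          rw [degE, sep_grand_pend hT hwc hpc hlc, Set.ncard_singleton]
        rw [hdeg2, hdeg1] at hnew
        omega
  · rintro (⟨a, b, c, hpw, hEq⟩ | ⟨a, b, c, hpw, hEq⟩ | ⟨a, b, c, d, hpw, hEq⟩)
    · rw [hEq]; exact notLI1 hpw
    · rw [hEq]; exact notLI2 hpw
    · rw [hEq]; exact notLI3 hpw
end

section
/- For every tree T rooted at a vertex r (with at least one edge and T not isomorphic to K_2), the 2-multigraph ²T admits a red-blue edge coloring such that within each color class all adjacent pairs of vertices have distinct degrees, except possibly for conflicts between r and at most two of its neighbors; moreover this coloring can be chosen so that r and all its neighbors have even degree in each color class. -/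
open Finset SimpleGraph

/-! Root `T` at `r` and let `t u ∈ {0, 1, 2}` be the number of red copies of the doubled edge
joining `u` to its parent; the blue degree of `v` is then `2 deg v` minus its red degree.
Working from the leaves up, every non-root vertex `v` is either a leaf, a vertex whose only
child is a leaf, or *flexible*: the subtree below `v` can be weighted without conflicts so
that the red degree of `v` takes two values (one even) when the edge above carries 0 or 2 red
copies, and three values when it carries one. A parent with children of these kinds can
always choose weights and values at its children that avoid both colour conflicts.
At the root every child gets 0 or 2 red copies, with an even red degree; giving exactly `k`
children two red copies makes the red degree of `r` equal `2k`, and since each child is in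
conflict for at most one value of `k` in either regime, double counting over
`k ∈ {0, …, deg r}` finds a `k` with at most one conflict. -/

lemma exists_ne_ne_of_pairwise_ne {α : Type*} {P : α → Prop} {a b c : α} (hab : a ≠ b)
    (hac : a ≠ c) (hbc : b ≠ c) (ha : P a) (hb : P b) (hc : P c) (x y : α) :
    ∃ s, P s ∧ s ≠ x ∧ s ≠ y := by
  by_cases ha' : a ≠ x ∧ a ≠ y
  · exact ⟨a, ha, ha'⟩
  by_cases hb' : b ≠ x ∧ b ≠ y
  · exact ⟨b, hb, hb'⟩
  refine ⟨c, hc, ?_, ?_⟩ <;> rintro rfl <;> grind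

lemma sum_card_filter_le_card {α β : Type*} (C : Finset α) (K : Finset β) (P : α → β → Prop)
    [∀ a b, Decidable (P a b)] (hP : ∀ a ∈ C, ∀ k₁ k₂, P a k₁ → P a k₂ → k₁ = k₂) :
    ∑ k ∈ K, #{a ∈ C | P a k} ≤ #C :=
  calc ∑ k ∈ K, #{a ∈ C | P a k} = ∑ a ∈ C, #{k ∈ K | P a k} :=
        (sum_card_bipartiteAbove_eq_sum_card_bipartiteBelow _).symm
    _ ≤ ∑ _a ∈ C, 1 := sum_le_sum fun a ha => card_le_one.2 fun k₁ h₁ k₂ h₂ =>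
        hP a ha k₁ k₂ (mem_filter.1 h₁).2 (mem_filter.1 h₂).2
    _ = #C := by rw [sum_const, smul_eq_mul, mul_one]

lemma exists_card_filter_add_card_filter_le_one {α β : Type*} (C : Finset α) (K : Finset β)
    (hCK : #C < #K) (P Q : α → β → Prop) [∀ a b, Decidable (P a b)] [∀ a b, Decidable (Q a b)]
    (hP : ∀ a ∈ C, ∀ k₁ k₂, P a k₁ → P a k₂ → k₁ = k₂)
    (hQ : ∀ a ∈ C, ∀ k₁ k₂, Q a k₁ → Q a k₂ → k₁ = k₂) :
    ∃ k ∈ K, #{a ∈ C | P a k} + #{a ∈ C | Q a k} ≤ 1 := by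
  by_contra! h
  have := card_nsmul_le_sum K _ 2 h
  rw [sum_add_distrib, smul_eq_mul] at this
  have := sum_card_filter_le_card C K P hP
  have := sum_card_filter_le_card C K Q hQ
  omega

lemma degIn2_zero_add_degIn2_one {V : Type*} [Fintype V] (G : SimpleGraph V) [DecidableRel G.Adj]
    (c : Sym2 V → Fin 2 × Fin 2) (v : V) :
    degIn2 G c 0 v + degIn2 G c 1 v = 2 * #(univ.filter (fun w => G.Adj v w)) := by
  rw [degIn2, degIn2, ← sum_add_distrib, card_eq_sum_ones, mul_sum]
  refine sum_congr rfl fun w _ => ?_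
  obtain ⟨a, b⟩ := c s(v, w)
  fin_cases a <;> fin_cases b <;> rfl

/-- A tree rooted at `root`, given by its parent map; `depth` certifies that iterating
`parent` reaches the root. -/
structure ParentTree (V : Type*) where
  root : V
  parent : V → V
  depth : V → ℕ
  parent_root : parent root = root
  depth_root : depth root = 0
  depth_parent : ∀ v, v ≠ root → depth v = depth (parent v) + 1

namespace ParentTree

section Subtree

variable {V : Type*} (R : ParentTree V)

def subtree (v : V) : Set V := {u | ∃ n, R.parent^[n] u = v}

variable {R} {u v x : V}

lemma mem_subtree_self (v : V) : v ∈ R.subtree v := ⟨0, rfl⟩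

lemma iterate_parent_root (n : ℕ) : R.parent^[n] R.root = R.root :=
  Function.iterate_fixed R.parent_root n

lemma mem_subtree_root (u : V) : u ∈ R.subtree R.root := by
  refine ⟨R.depth u, ?_⟩
  induction h : R.depth u generalizing u with
  | zero => by_contra hu; simp [R.depth_parent u hu] at h
  | succ n ih =>
    by_cases hu : u = R.root
    · subst hu; exact iterate_parent_root _
    · rw [Function.iterate_succ_apply, ih (R.parent u) (by rw [R.depth_parent u hu] at h; omega)]

lemma subtree_subset (h : u ∈ R.subtree v) : R.subtree u ⊆ R.subtree v := by
  rintro x ⟨m, hm⟩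
  obtain ⟨n, hn⟩ := h
  exact ⟨n + m, by rw [Function.iterate_add_apply, hm, hn]⟩

lemma depth_le_of_mem_subtree (h : u ∈ R.subtree v) : R.depth v ≤ R.depth u := by
  obtain ⟨n, rfl⟩ := h
  induction n generalizing u with
  | zero => rfl
  | succ n ih =>
    refine (ih (u := R.parent u)).trans ?_
    by_cases hu : u = R.root
    · rw [hu, R.parent_root]
    · rw [R.depth_parent u hu]; omega

lemma parent_mem_subtree (h : u ∈ R.subtree v) (hne : u ≠ v) : R.parent u ∈ R.subtree v := by
  obtain ⟨_ | n, hn⟩ := h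
  · exact absurd hn hne
  · exact ⟨n, hn⟩

lemma depth_lt_of_mem_subtree (h : u ∈ R.subtree v) (hne : u ≠ v) : R.depth v < R.depth u := by
  have hu : u ≠ R.root := by
    rintro rfl
    obtain ⟨n, hn⟩ := h
    exact hne (by rw [← hn, iterate_parent_root])
  have := depth_le_of_mem_subtree (parent_mem_subtree h hne)
  rw [R.depth_parent u hu]
  omega

lemma mem_subtree_or_mem_subtree (hu : x ∈ R.subtree u) (hv : x ∈ R.subtree v) :
    u ∈ R.subtree v ∨ v ∈ R.subtree u := by
  obtain ⟨a, rfl⟩ := hu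
  obtain ⟨b, rfl⟩ := hv
  rcases le_total a b with h | h
  · obtain ⟨c, rfl⟩ := Nat.exists_eq_add_of_le h
    exact Or.inl ⟨c, by rw [← Function.iterate_add_apply, Nat.add_comm]⟩
  · obtain ⟨c, rfl⟩ := Nat.exists_eq_add_of_le h
    exact Or.inr ⟨c, by rw [← Function.iterate_add_apply, Nat.add_comm]⟩

end Subtree

section Children

variable {V : Type*} [Fintype V] [DecidableEq V] (R : ParentTree V)

def children (v : V) : Finset V := {u | u ≠ R.root ∧ R.parent u = v}

def degree (v : V) : ℕ := #(R.children v) + if v = R.root then 0 else 1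

variable {R} {u u₁ u₂ v x : V}

lemma mem_children : u ∈ R.children v ↔ u ≠ R.root ∧ R.parent u = v := by simp [children]

lemma ne_root_of_mem_children (h : u ∈ R.children v) : u ≠ R.root := (mem_children.1 h).1

lemma parent_eq_of_mem_children (h : u ∈ R.children v) : R.parent u = v := (mem_children.1 h).2

lemma mem_subtree_of_mem_children (h : u ∈ R.children v) : u ∈ R.subtree v :=
  ⟨1, parent_eq_of_mem_children h⟩

lemma depth_of_mem_children (h : u ∈ R.children v) : R.depth u = R.depth v + 1 := by
  rw [R.depth_parent u (ne_root_of_mem_children h), parent_eq_of_mem_children h]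

lemma notMem_subtree_of_mem_children (h : u ∈ R.children v) : v ∉ R.subtree u := fun hv => by
  have := depth_le_of_mem_subtree hv
  have := depth_of_mem_children h
  omega

lemma subtree_ssubset (h : u ∈ R.children v) : R.subtree u ⊂ R.subtree v :=
  (Set.ssubset_iff_of_subset (subtree_subset (mem_subtree_of_mem_children h))).2
    ⟨v, mem_subtree_self v, notMem_subtree_of_mem_children h⟩

lemma exists_mem_children_mem_subtree (h : x ∈ R.subtree v) (hne : x ≠ v) :
    ∃ u ∈ R.children v, x ∈ R.subtree u := by
  obtain ⟨n, hn⟩ := h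
  induction n generalizing x with
  | zero => exact absurd hn hne
  | succ n ih =>
    rw [Function.iterate_succ_apply] at hn
    by_cases hp : R.parent x = v
    · refine ⟨x, mem_children.2 ⟨?_, hp⟩, mem_subtree_self x⟩
      rintro rfl
      exact hne (by rw [← hp, R.parent_root])
    · obtain ⟨u, hu, hxu⟩ := ih hp hn
      exact ⟨u, hu, subtree_subset hxu ⟨1, rfl⟩⟩

lemma eq_of_mem_subtree_of_mem_children (hu₁ : u₁ ∈ R.children v) (hu₂ : u₂ ∈ R.children v)
    (h₁ : x ∈ R.subtree u₁) (h₂ : x ∈ R.subtree u₂) : u₁ = u₂ := by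
  by_contra hne
  have := depth_of_mem_children hu₁
  have := depth_of_mem_children hu₂
  rcases mem_subtree_or_mem_subtree h₁ h₂ with h | h
  · have := depth_lt_of_mem_subtree h hne; omega
  · have := depth_lt_of_mem_subtree h (Ne.symm hne); omega

end Children

/-- An edge carrying `w` red copies, between a vertex of red degree `s` and degree `du` and its
parent of red degree `S` and degree `dv`, is not a conflict. The blue clause says
`2 * du - s ≠ 2 * dv - S`, rearranged to avoid truncated subtraction. -/
def NoConflict (s du w S dv : ℕ) : Prop :=
  (1 ≤ w → s ≠ S) ∧ (w ≤ 1 → s + 2 * dv ≠ S + 2 * du)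

instance (s du w S dv : ℕ) : Decidable (NoConflict s du w S dv) :=
  inferInstanceAs (Decidable (_ ∧ _))

section Weighting

variable {V : Type*} [Fintype V] [DecidableEq V] (R : ParentTree V)

def redDeg (t : V → ℕ) (v : V) : ℕ := (if v = R.root then 0 else t v) + ∑ u ∈ R.children v, t u

def ConflictFreeAt (t : V → ℕ) (u : V) : Prop :=
  NoConflict (R.redDeg t u) (R.degree u) (t u) (R.redDeg t (R.parent u)) (R.degree (R.parent u))

def ConflictFreeBelow (t : V → ℕ) (v : V) : Prop :=
  ∀ u ∈ R.subtree v, u ≠ v → R.ConflictFreeAt t u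

def Achieves (v : V) (τ s : ℕ) : Prop :=
  ∃ t : V → ℕ, (∀ x, t x ≤ 2) ∧ t v = τ ∧ R.ConflictFreeBelow t v ∧ R.redDeg t v = s

variable {R} {t t₁ t₂ : V → ℕ} {u v : V}

lemma redDeg_congr (h : ∀ x ∈ R.subtree v, t₁ x = t₂ x) (hu : u ∈ R.subtree v) :
    R.redDeg t₁ u = R.redDeg t₂ u := by
  unfold redDeg
  rw [h u hu, sum_congr rfl fun x hx => h x (subtree_subset hu (mem_subtree_of_mem_children hx))]

lemma ConflictFreeBelow.congr (h : ∀ x ∈ R.subtree v, t₁ x = t₂ x)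
    (h₁ : R.ConflictFreeBelow t₁ v) : R.ConflictFreeBelow t₂ v := by
  intro u hu hne
  have := h₁ u hu hne
  unfold ConflictFreeAt at this ⊢
  rwa [← redDeg_congr h hu, ← redDeg_congr h (parent_mem_subtree hu hne), ← h u hu]

lemma conflictFreeAt_iff_of_mem_children (hu : u ∈ R.children v) :
    R.ConflictFreeAt t u ↔
      NoConflict (R.redDeg t u) (R.degree u) (t u) (R.redDeg t v) (R.degree v) := by
  rw [ConflictFreeAt, parent_eq_of_mem_children hu]

lemma conflictFreeBelow_of_forall_mem_children
    (h : ∀ u ∈ R.children v, R.ConflictFreeAt t u ∧ R.ConflictFreeBelow t u) :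
    R.ConflictFreeBelow t v := by
  intro x hx hne
  obtain ⟨u, hu, hxu⟩ := exists_mem_children_mem_subtree hx hne
  obtain rfl | hxu' := eq_or_ne x u
  · exact (h x hu).1
  · exact (h u hu).2 x hxu hxu'

lemma exists_glue (v : V) {τ : ℕ} (hτ : τ ≤ 2) (T : V → V → ℕ)
    (hT : ∀ u ∈ R.children v, ∀ x, T u x ≤ 2) :
    ∃ t : V → ℕ, (∀ x, t x ≤ 2) ∧ t v = τ ∧ ∀ u ∈ R.children v, ∀ x ∈ R.subtree u, t x = T u x := by
  classical
  refine ⟨fun x => if x = v then τ else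
    if h : ∃ u ∈ R.children v, x ∈ R.subtree u then T h.choose x else 0, ?_, if_pos rfl, ?_⟩
  · intro x
    dsimp only
    split_ifs with _ h
    exacts [hτ, hT _ h.choose_spec.1 x, by omega]
  · intro u hu x hx
    have hex : ∃ u ∈ R.children v, x ∈ R.subtree u := ⟨u, hu, hx⟩
    have hxv : x ≠ v := by rintro rfl; exact notMem_subtree_of_mem_children hu hx
    dsimp only
    rw [if_neg hxv, dif_pos hex,
      eq_of_mem_subtree_of_mem_children hex.choose_spec.1 hu hex.choose_spec.2 hx]

lemma exists_extend (v : V) {τ : ℕ} (hτ : τ ≤ 2) (w s : V → ℕ)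
    (h : ∀ u ∈ R.children v, R.Achieves u (w u) (s u)) :
    ∃ t : V → ℕ, (∀ x, t x ≤ 2) ∧ t v = τ ∧
      ∀ u ∈ R.children v, t u = w u ∧ R.redDeg t u = s u ∧ R.ConflictFreeBelow t u := by
  choose! T hT2 hTu hTfree hTred using h
  obtain ⟨t, ht2, htv, htT⟩ := exists_glue v hτ T hT2
  refine ⟨t, ht2, htv, fun u hu => ⟨?_, ?_, ?_⟩⟩
  · rw [htT u hu u (mem_subtree_self u), hTu u hu]
  · rw [redDeg_congr (htT u hu) (mem_subtree_self u), hTred u hu]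
  · exact (hTfree u hu).congr fun x hx => (htT u hu x hx).symm

lemma achieves_of_forall_mem_children (hv : v ≠ R.root) {τ : ℕ} (hτ : τ ≤ 2) (k : ℕ)
    (h : ∀ u ∈ R.children v, ∃ s, R.Achieves u k s ∧
      NoConflict s (R.degree u) k (τ + #(R.children v) * k) (R.degree v)) :
    R.Achieves v τ (τ + #(R.children v) * k) := by
  choose! s hs hfree using h
  obtain ⟨t, ht2, htv, htu⟩ := exists_extend v hτ (fun _ => k) s hs
  have hred : R.redDeg t v = τ + #(R.children v) * k := by
    rw [redDeg, if_neg hv, htv, sum_congr rfl fun u hu => (htu u hu).1, sum_const, smul_eq_mul]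
  refine ⟨t, ht2, htv, conflictFreeBelow_of_forall_mem_children fun u hu => ⟨?_, (htu u hu).2.2⟩,
    hred⟩
  rw [conflictFreeAt_iff_of_mem_children hu, (htu u hu).1, (htu u hu).2.1, hred]
  exact hfree u hu

lemma achieves_of_children_eq_empty (hv : v ≠ R.root) (h : R.children v = ∅) {τ : ℕ}
    (hτ : τ ≤ 2) : R.Achieves v τ τ := by
  simpa [h] using achieves_of_forall_mem_children hv hτ 0 (by simp [h])

lemma achieves_of_children_eq_singleton (hv : v ≠ R.root) (h : R.children v = {u}) {τ k s : ℕ}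
    (hτ : τ ≤ 2) (hs : R.Achieves u k s) (hc : NoConflict s (R.degree u) k (τ + k) 2) :
    R.Achieves v τ (τ + k) := by
  have hdeg : R.degree v = 2 := by simp [degree, h, hv]
  simpa [h] using achieves_of_forall_mem_children hv hτ k (by simpa [h, hdeg] using ⟨s, hs, hc⟩)

end Weighting

section Admissible

variable {V : Type*} [Fintype V] [DecidableEq V] (R : ParentTree V)

/-- The red degrees achievable at a vertex whose only child is a leaf. -/
def IsStem (v : V) : Prop :=
  R.degree v = 2 ∧ R.Achieves v 0 0 ∧ R.Achieves v 1 1 ∧ R.Achieves v 1 2 ∧ R.Achieves v 1 3 ∧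
    R.Achieves v 2 4

def IsFlexible (v : V) : Prop :=
  (∃ a₁ a₂, a₁ ≠ a₂ ∧ Even a₁ ∧ R.Achieves v 0 a₁ ∧ R.Achieves v 0 a₂) ∧
  (∃ b₁ b₂ b₃, b₁ ≠ b₂ ∧ b₁ ≠ b₃ ∧ b₂ ≠ b₃ ∧
    R.Achieves v 1 b₁ ∧ R.Achieves v 1 b₂ ∧ R.Achieves v 1 b₃) ∧
  (∃ c₁ c₂, c₁ ≠ c₂ ∧ Even c₁ ∧ R.Achieves v 2 c₁ ∧ R.Achieves v 2 c₂)

def Admissible (v : V) : Prop := R.children v = ∅ ∨ R.IsStem v ∨ R.IsFlexible v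

variable {R} {u v : V}

lemma degree_of_children_eq_empty (hu : u ≠ R.root) (h : R.children u = ∅) : R.degree u = 1 := by
  simp [degree, h, hu]

lemma IsFlexible.exists_noConflict (h : R.IsFlexible u) {k : ℕ} (hk : k ≤ 2) (S dv : ℕ) :
    ∃ s, R.Achieves u k s ∧ NoConflict s (R.degree u) k S dv := by
  obtain ⟨⟨a₁, a₂, ha, -, ha₁, ha₂⟩, ⟨b₁, b₂, b₃, hb₁₂, hb₁₃, hb₂₃, hb₁, hb₂, hb₃⟩,
    ⟨c₁, c₂, hc, -, hc₁, hc₂⟩⟩ := h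
  interval_cases k
  · obtain ⟨s, hs, hne⟩ := (show {s | R.Achieves u 0 s}.Nontrivial from ⟨a₁, ha₁, a₂, ha₂, ha⟩)
      |>.exists_ne (S + 2 * R.degree u - 2 * dv)
    exact ⟨s, hs, by omega, fun _ => by omega⟩
  · obtain ⟨s, hs, h₁, h₂⟩ := exists_ne_ne_of_pairwise_ne hb₁₂ hb₁₃ hb₂₃ hb₁ hb₂ hb₃ S
      (S + 2 * R.degree u - 2 * dv)
    exact ⟨s, hs, fun _ => h₁, fun _ => by omega⟩
  · obtain ⟨s, hs, hne⟩ := (show {s | R.Achieves u 2 s}.Nontrivial from ⟨c₁, hc₁, c₂, hc₂, hc⟩)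
      |>.exists_ne S
    exact ⟨s, hs, fun _ => hne, by omega⟩

lemma Admissible.exists_noConflict_zero (hu : u ≠ R.root) (h : R.Admissible u) {S dv : ℕ}
    (h₁ : 2 * dv ≠ S + 2) (h₂ : 2 * dv ≠ S + 4) :
    ∃ s, R.Achieves u 0 s ∧ NoConflict s (R.degree u) 0 S dv := by
  rcases h with hleaf | hstem | hflex
  · refine ⟨0, achieves_of_children_eq_empty hu hleaf (by omega), ?_⟩
    rw [degree_of_children_eq_empty hu hleaf]
    exact ⟨by omega, fun _ => by omega⟩
  · exact ⟨0, hstem.2.1, by rw [hstem.1]; exact ⟨by omega, fun _ => by omega⟩⟩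
  · exact hflex.exists_noConflict (by omega) S dv

lemma Admissible.exists_noConflict_one (hu : u ≠ R.root) (h : R.Admissible u) {S dv : ℕ}
    (h₁ : S ≠ 1) (h₂ : 2 * dv ≠ S + 1) :
    ∃ s, R.Achieves u 1 s ∧ NoConflict s (R.degree u) 1 S dv := by
  rcases h with hleaf | ⟨hdeg, -, h₁₁, h₁₂, h₁₃, -⟩ | hflex
  · refine ⟨1, achieves_of_children_eq_empty hu hleaf (by omega), ?_⟩
    rw [degree_of_children_eq_empty hu hleaf]
    exact ⟨fun _ => by omega, fun _ => by omega⟩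
  · obtain ⟨s, hs, hS, hS'⟩ := exists_ne_ne_of_pairwise_ne (by decide) (by decide) (by decide)
      h₁₁ h₁₂ h₁₃ S (S + 4 - 2 * dv)
    exact ⟨s, hs, by rw [hdeg]; exact ⟨fun _ => hS, fun _ => by omega⟩⟩
  · exact hflex.exists_noConflict (by omega) S dv

lemma Admissible.exists_noConflict_two (hu : u ≠ R.root) (h : R.Admissible u) {S dv : ℕ}
    (h₁ : S ≠ 2) (h₂ : S ≠ 4) :
    ∃ s, R.Achieves u 2 s ∧ NoConflict s (R.degree u) 2 S dv := by
  rcases h with hleaf | hstem | hflex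
  · exact ⟨2, achieves_of_children_eq_empty hu hleaf (by omega), fun _ => by omega, by omega⟩
  · exact ⟨4, hstem.2.2.2.2.2, fun _ => by omega, by omega⟩
  · exact hflex.exists_noConflict (by omega) S dv

lemma Admissible.exists_even_achieves (hu : u ≠ R.root) (h : R.Admissible u) :
    (∃ a, Even a ∧ R.Achieves u 0 a) ∧ ∃ c, Even c ∧ R.Achieves u 2 c := by
  rcases h with hleaf | hstem | ⟨⟨a, -, -, ha, ha', -⟩, -, ⟨c, -, -, hc, hc', -⟩⟩
  · exact ⟨⟨0, by decide, achieves_of_children_eq_empty hu hleaf (by omega)⟩,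
      ⟨2, by decide, achieves_of_children_eq_empty hu hleaf (by omega)⟩⟩
  · exact ⟨⟨0, by decide, hstem.2.1⟩, ⟨4, by decide, hstem.2.2.2.2.2⟩⟩
  · exact ⟨⟨a, ha, ha'⟩, ⟨c, hc, hc'⟩⟩

lemma isStem_of_children_eq_singleton (hv : v ≠ R.root) (h : R.children v = {u})
    (hu : R.children u = ∅) : R.IsStem v := by
  have hur : u ≠ R.root := ne_root_of_mem_children (h ▸ mem_singleton_self u)
  have key : ∀ τ k, τ ≤ 2 → k ≤ 2 → NoConflict k 1 k (τ + k) 2 → R.Achieves v τ (τ + k) :=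
    fun τ k hτ hk hc => achieves_of_children_eq_singleton hv h hτ
      (achieves_of_children_eq_empty hur hu hk) (by rwa [degree_of_children_eq_empty hur hu])
  exact ⟨by simp [degree, h, hv], key 0 0 (by omega) (by omega) (by decide),
    key 1 0 (by omega) (by omega) (by decide), key 1 1 (by omega) (by omega) (by decide),
    key 1 2 (by omega) (by omega) (by decide), key 2 2 (by omega) (by omega) (by decide)⟩

lemma isFlexible_of_children_eq_singleton_of_isStem (hv : v ≠ R.root) (h : R.children v = {u})
    (hu : R.IsStem u) : R.IsFlexible v := by
  obtain ⟨hdeg, h₀₀, h₁₁, h₁₂, -, h₂₄⟩ := hu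
  have key : ∀ τ {k s}, τ ≤ 2 → R.Achieves u k s → NoConflict s 2 k (τ + k) 2 →
      R.Achieves v τ (τ + k) :=
    fun τ _ _ hτ hs hc => achieves_of_children_eq_singleton hv h hτ hs (hdeg ▸ hc)
  exact ⟨⟨2, 1, by decide, by decide, key 0 (by omega) h₂₄ (by decide),
      key 0 (by omega) h₁₂ (by decide)⟩,
    ⟨1, 2, 3, by decide, by decide, by decide, key 1 (by omega) h₀₀ (by decide),
      key 1 (by omega) h₁₁ (by decide), key 1 (by omega) h₂₄ (by decide)⟩,
    ⟨2, 3, by decide, by decide, key 2 (by omega) h₀₀ (by decide),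
      key 2 (by omega) h₁₁ (by decide)⟩⟩

lemma isFlexible_of_children_eq_singleton_of_isFlexible (hv : v ≠ R.root)
    (h : R.children v = {u}) (hu : R.IsFlexible u) : R.IsFlexible v := by
  have key : ∀ τ k, τ ≤ 2 → k ≤ 2 → R.Achieves v τ (τ + k) := fun τ k hτ hk =>
    have ⟨_, hs, hc⟩ := hu.exists_noConflict hk (τ + k) 2
    achieves_of_children_eq_singleton hv h hτ hs hc
  exact ⟨⟨0, 1, by decide, by decide, key 0 0 (by omega) (by omega), key 0 1 (by omega) (by omega)⟩,
    ⟨1, 2, 3, by decide, by decide, by decide, key 1 0 (by omega) (by omega),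
      key 1 1 (by omega) (by omega), key 1 2 (by omega) (by omega)⟩,
    ⟨4, 3, by decide, by decide, key 2 2 (by omega) (by omega), key 2 1 (by omega) (by omega)⟩⟩

lemma isFlexible_of_one_lt_card_children (hv : v ≠ R.root) (hc : 1 < #(R.children v))
    (h : ∀ u ∈ R.children v, R.Admissible u) : R.IsFlexible v := by
  set c := #(R.children v)
  have hdeg : R.degree v = c + 1 := by simp [degree, hv, c]
  have hur : ∀ u ∈ R.children v, u ≠ R.root := fun _ => ne_root_of_mem_children
  have via₀ : ∀ τ, τ ≤ 1 → R.Achieves v τ τ := fun τ hτ => by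
    simpa using achieves_of_forall_mem_children hv (by omega) 0 fun u hu =>
      (h u hu).exists_noConflict_zero (hur u hu) (by omega) (by omega)
  have via₁ : ∀ τ, τ ≤ 2 → R.Achieves v τ (τ + c) := fun τ hτ => by
    simpa using achieves_of_forall_mem_children hv hτ 1 fun u hu =>
      (h u hu).exists_noConflict_one (hur u hu) (by omega) (by omega)
  have via₂ : ∀ τ, 1 ≤ τ → τ ≤ 2 → R.Achieves v τ (τ + c * 2) := fun τ hτ hτ' =>
    achieves_of_forall_mem_children hv hτ' 2 fun u hu =>
      (h u hu).exists_noConflict_two (hur u hu) (by omega) (by omega)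
  exact ⟨⟨0, c, by omega, by decide, via₀ 0 (by omega), by simpa using via₁ 0 (by omega)⟩,
    ⟨1, 1 + c, 1 + c * 2, by omega, by omega, by omega, via₀ 1 le_rfl, via₁ 1 (by omega),
      via₂ 1 le_rfl (by omega)⟩,
    ⟨2 + c * 2, 2 + c, by omega, ⟨1 + c, by ring⟩, via₂ 2 (by omega) le_rfl, via₁ 2 le_rfl⟩⟩

theorem admissible {w : V} (hw : w ≠ R.root) : R.Admissible w := by
  have ih : ∀ u ∈ R.children w, R.Admissible u := fun u hu =>
    admissible (ne_root_of_mem_children hu)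
  obtain h | h | h : #(R.children w) = 0 ∨ #(R.children w) = 1 ∨ 1 < #(R.children w) := by omega
  · exact Or.inl (card_eq_zero.1 h)
  · obtain ⟨u, hu⟩ := card_eq_one.1 h
    rcases ih u (by simp [hu]) with hleaf | hstem | hflex
    · exact Or.inr (Or.inl (isStem_of_children_eq_singleton hw hu hleaf))
    · exact Or.inr (Or.inr (isFlexible_of_children_eq_singleton_of_isStem hw hu hstem))
    · exact Or.inr (Or.inr (isFlexible_of_children_eq_singleton_of_isFlexible hw hu hflex))
  · exact Or.inr (Or.inr (isFlexible_of_one_lt_card_children hw h ih))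
termination_by (R.subtree w).ncard
decreasing_by exact Set.ncard_lt_ncard (subtree_ssubset hu)

end Admissible

section Root

variable {V : Type*} [Fintype V] [DecidableEq V] (R : ParentTree V)

theorem exists_weighting :
    ∃ (t : V → ℕ) (N : Finset V), (∀ x, t x ≤ 2) ∧ N ⊆ R.children R.root ∧ #N ≤ 1 ∧
      (∀ u, u ≠ R.root → u ∉ N → R.ConflictFreeAt t u) ∧ Even (R.redDeg t R.root) ∧
      ∀ u ∈ R.children R.root, Even (R.redDeg t u) := by
  classical
  set C := R.children R.root
  have hC : ∀ u ∈ C, u ≠ R.root := fun _ => ne_root_of_mem_children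
  choose! a ha hach₀ using fun u hu => ((admissible (hC u hu)).exists_even_achieves (hC u hu)).1
  choose! c hc hach₂ using fun u hu => ((admissible (hC u hu)).exists_even_achieves (hC u hu)).2
  -- With red degree `2 * k` at the root, a child carrying 0 (resp. 2) red copies is in
  -- conflict iff `a u + 2 * #C = 2 * k + 2 * degree u` (resp. `c u = 2 * k`).
  obtain ⟨k, hk, hbad⟩ := exists_card_filter_add_card_filter_le_one C (range (#C + 1))
    (by simp) (fun u k => a u + 2 * #C = 2 * k + 2 * R.degree u) (fun u k => c u = 2 * k)
    (fun _ _ _ _ _ _ => by omega) (fun _ _ _ _ _ _ => by omega)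
  obtain ⟨F, hFC, hF⟩ := exists_subset_card_eq (show k ≤ #C by simp at hk; omega)
  obtain ⟨t, ht, -, htC⟩ := R.exists_extend R.root (τ := 0) (by omega)
    (fun u => if u ∈ F then 2 else 0) (fun u => if u ∈ F then c u else a u)
    fun u hu => by split_ifs; exacts [hach₂ u hu, hach₀ u hu]
  have hroot : R.redDeg t R.root = 2 * k := by
    rw [redDeg, if_pos rfl, zero_add, sum_congr rfl fun u hu => (htC u hu).1, sum_ite_mem,
      inter_eq_right.2 hFC, sum_const, smul_eq_mul, hF, mul_comm]
  have hdeg : R.degree R.root = #C := by simp [degree, C]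
  refine ⟨t, {u ∈ C | ¬ R.ConflictFreeAt t u}, ht, filter_subset _ _, ?_, ?_, ⟨k, by omega⟩,
    fun u hu => ?_⟩
  · refine (card_le_card fun u hu => ?_).trans ((card_union_le _ _).trans hbad)
    obtain ⟨huC, hfree⟩ := mem_filter.1 hu
    rw [conflictFreeAt_iff_of_mem_children huC, (htC u huC).1, (htC u huC).2.1, hroot,
      hdeg] at hfree
    simp only [mem_union, mem_filter, huC, true_and]
    split_ifs at hfree <;> simp only [NoConflict] at hfree <;> omega
  · intro u hu huN
    obtain ⟨v, hv, huv⟩ := exists_mem_children_mem_subtree (mem_subtree_root u) hu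
    obtain rfl | hne := eq_or_ne u v
    · by_contra h
      exact huN (mem_filter.2 ⟨hv, h⟩)
    · exact (htC v hv).2.2 u huv hne
  · rw [(htC u hu).2.1]
    split_ifs
    exacts [hc u hu, ha u hu]

end Root

section Graph

variable {V : Type*} (R : ParentTree V)

def graph : SimpleGraph V := SimpleGraph.fromRel fun u v => u ≠ R.root ∧ R.parent u = v

variable {R} {v w : V}

lemma parent_ne (hv : v ≠ R.root) : R.parent v ≠ v := fun h => by
  have := R.depth_parent v hv
  rw [h] at this
  omega

lemma parent_parent_ne (hv : v ≠ R.root) (hp : R.parent v ≠ R.root) :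
    R.parent (R.parent v) ≠ v := fun h => by
  have := R.depth_parent v hv
  have := R.depth_parent _ hp
  rw [h] at this
  omega

lemma graph_adj :
    R.graph.Adj v w ↔ (v ≠ R.root ∧ R.parent v = w) ∨ (w ≠ R.root ∧ R.parent w = v) := by
  rw [graph, fromRel_adj, and_iff_right_iff_imp]
  rintro (⟨hv, rfl⟩ | ⟨hw, rfl⟩)
  exacts [(parent_ne hv).symm, parent_ne hw]

end Graph

/-- Colour `0` is red: `n ≤ 2` red copies of an edge and `2 - n` blue ones. -/
def colorPair (n : ℕ) : Fin 2 × Fin 2 := if n = 0 then (1, 1) else if n = 1 then (0, 1) else (0, 0)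

lemma colorPair_count_zero {n : ℕ} (hn : n ≤ 2) :
    (if (colorPair n).1 = 0 then 1 else 0) + (if (colorPair n).2 = 0 then 1 else 0) = n := by
  interval_cases n <;> rfl

lemma colorPair_mem_zero {n : ℕ} (hn : n ≤ 2) :
    (colorPair n).1 = 0 ∨ (colorPair n).2 = 0 ↔ 1 ≤ n := by
  interval_cases n <;> decide

lemma colorPair_mem_one {n : ℕ} (hn : n ≤ 2) :
    (colorPair n).1 = 1 ∨ (colorPair n).2 = 1 ↔ n ≤ 1 := by
  interval_cases n <;> decide

section Coloring

variable {V : Type*} [DecidableEq V] (R : ParentTree V)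

def edgeWeight (t : V → ℕ) (v w : V) : ℕ :=
  if v ≠ R.root ∧ R.parent v = w then t v else if w ≠ R.root ∧ R.parent w = v then t w else 0

lemma edgeWeight_comm (t : V → ℕ) (v w : V) : R.edgeWeight t v w = R.edgeWeight t w v := by
  unfold edgeWeight
  by_cases hvw : v ≠ R.root ∧ R.parent v = w
  · obtain ⟨hv, rfl⟩ := hvw
    by_cases hw : R.parent v = R.root
    · simp [hv, hw]
    · simp [hv, parent_parent_ne hv hw]
  · simp [hvw]

def coloring (t : V → ℕ) : Sym2 V → Fin 2 × Fin 2 :=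
  Sym2.lift ⟨fun v w => colorPair (R.edgeWeight t v w),
    fun v w => congrArg colorPair (R.edgeWeight_comm t v w)⟩

variable {R} {u v w : V} {t : V → ℕ}

lemma coloring_mk : R.coloring t s(v, w) = colorPair (R.edgeWeight t v w) := rfl

lemma edgeWeight_parent (hv : v ≠ R.root) : R.edgeWeight t v (R.parent v) = t v := by
  simp [edgeWeight, hv]

variable [Fintype V]

lemma edgeWeight_of_mem_children (hu : u ∈ R.children v) : R.edgeWeight t v u = t u := by
  obtain ⟨hu', rfl⟩ := mem_children.1 hu
  by_cases hv : R.parent u = R.root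
  · simp [edgeWeight, hu', hv]
  · simp [edgeWeight, hu', parent_parent_ne hu' hv]

lemma parent_notMem_children (hv : v ≠ R.root) : R.parent v ∉ R.children v := fun h =>
  parent_parent_ne hv (ne_root_of_mem_children h) (parent_eq_of_mem_children h)

variable [DecidableRel R.graph.Adj]

lemma sum_filter_graph_adj {M : Type*} [AddCommMonoid M] (f : V → M) (v : V) :
    ∑ w ∈ univ.filter (fun w => R.graph.Adj v w), f w =
      (if v = R.root then 0 else f (R.parent v)) + ∑ u ∈ R.children v, f u := by
  by_cases hv : v = R.root
  · subst hv
    rw [if_pos rfl, zero_add]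
    congr 1
    ext w
    simp [graph_adj, mem_children]
  · rw [if_neg hv, ← sum_insert (parent_notMem_children hv)]
    congr 1
    ext w
    simp only [mem_filter, mem_univ, true_and, mem_insert, mem_children, graph_adj, hv, ne_eq,
      not_false_eq_true]
    tauto

lemma card_filter_graph_adj (v : V) :
    #(univ.filter (fun w => R.graph.Adj v w)) = R.degree v := by
  rw [card_eq_sum_ones, sum_filter_graph_adj, degree, ← card_eq_sum_ones]
  split_ifs <;> omega

lemma degIn2_coloring_zero (ht : ∀ x, t x ≤ 2) (v : V) :
    degIn2 R.graph (R.coloring t) 0 v = R.redDeg t v := by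
  rw [degIn2, sum_filter_graph_adj, redDeg]
  congr 1
  · by_cases hv : v = R.root
    · rw [if_pos hv, if_pos hv]
    · rw [if_neg hv, if_neg hv, coloring_mk, edgeWeight_parent hv, colorPair_count_zero (ht v)]
  · exact sum_congr rfl fun u hu => by
      rw [coloring_mk, edgeWeight_of_mem_children hu, colorPair_count_zero (ht u)]


lemma degIn2_coloring_one_add_redDeg (ht : ∀ x, t x ≤ 2) (v : V) :
    degIn2 R.graph (R.coloring t) 1 v + R.redDeg t v = 2 * R.degree v := by
  rw [← degIn2_coloring_zero ht, add_comm, degIn2_zero_add_degIn2_one, card_filter_graph_adj]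

lemma degIn2_coloring_ne (ht : ∀ x, t x ≤ 2) (hv : v ≠ R.root) (hfree : R.ConflictFreeAt t v)
    {k : Fin 2}
    (hk : (R.coloring t s(v, R.parent v)).1 = k ∨ (R.coloring t s(v, R.parent v)).2 = k) :
    degIn2 R.graph (R.coloring t) k v ≠ degIn2 R.graph (R.coloring t) k (R.parent v) := by
  rw [coloring_mk, edgeWeight_parent hv] at hk
  obtain ⟨hred, hblue⟩ := hfree
  fin_cases k <;> simp only [Fin.zero_eta, Fin.mk_one] at hk ⊢
  · rw [degIn2_coloring_zero ht, degIn2_coloring_zero ht]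
    exact hred ((colorPair_mem_zero (ht v)).1 hk)
  · have := degIn2_coloring_one_add_redDeg (R := R) ht v
    have := degIn2_coloring_one_add_redDeg (R := R) ht (R.parent v)
    have := hblue ((colorPair_mem_one (ht v)).1 hk)
    omega

lemma even_degIn2_coloring (ht : ∀ x, t x ≤ 2) (h : Even (R.redDeg t v)) (k : Fin 2) :
    Even (degIn2 R.graph (R.coloring t) k v) := by
  fin_cases k <;> simp only [Fin.zero_eta, Fin.mk_one]
  · rwa [degIn2_coloring_zero ht]
  · have := degIn2_coloring_one_add_redDeg (R := R) ht v
    obtain ⟨m, hm⟩ := h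
    exact ⟨R.degree v - m, by omega⟩

end Coloring

end ParentTree

theorem SimpleGraph.IsTree.exists_parentTree {V : Type*} {T : SimpleGraph V} (hT : T.IsTree)
    (r : V) : ∃ R : ParentTree V, R.root = r ∧ R.graph = T := by
  classical
  choose p hp hpu using fun v => hT.existsUnique_path v r
  have hpr : p r = .nil := (hpu r .nil .nil).symm
  have hnil : ∀ {v}, v ≠ r → ¬ (p v).Nil := Walk.not_nil_of_ne
  have htail : ∀ {v}, v ≠ r → p (p v).snd = (p v).tail := fun _ => (hpu _ _ (hp _).tail).symm
  refine ⟨⟨r, fun v => (p v).snd, fun v => (p v).length, by simp [hpr], by simp [hpr],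
    fun v hv => by simp only [htail hv, Walk.length_tail_add_one (hnil hv)]⟩, rfl, ?_⟩
  ext v w
  rw [ParentTree.graph_adj]
  constructor
  · rintro (⟨hv, rfl⟩ | ⟨hw, rfl⟩)
    exacts [(p v).adj_snd (hnil hv), ((p w).adj_snd (hnil hw)).symm]
  · intro h
    by_cases hw : w ∈ (p v).support
    · have hv : v ≠ r := by
        rintro rfl
        simp [hpr] at hw
        exact h.ne hw.symm
      exact Or.inl ⟨hv, (hT.isAcyclic.eq_snd_of_adj_start (hp v) h hw).symm⟩
    · have hpw : p w = .cons h.symm (p v) := (hpu w _ ((hp v).cons hw)).symm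
      refine Or.inr ⟨?_, by simp [hpw]⟩
      rintro rfl
      exact hw (p v).end_mem_support

theorem stmt_15_general {V : Type*} [Fintype V] (T : SimpleGraph V)
    [DecidableRel T.Adj] (hT : T.IsTree) (r : V) :
    ∃ c : Sym2 V → Fin 2 × Fin 2, ∃ N : Finset V,
      N.card ≤ 2 ∧ (∀ w ∈ N, T.Adj r w) ∧
      (∀ v w, T.Adj v w → ∀ k : Fin 2, ((c s(v, w)).1 = k ∨ (c s(v, w)).2 = k) →
        degIn2 T c k v = degIn2 T c k w → (v = r ∧ w ∈ N) ∨ (w = r ∧ v ∈ N)) ∧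
      (∀ k : Fin 2, Even (degIn2 T c k r) ∧ ∀ w, T.Adj r w → Even (degIn2 T c k w)) := by
  classical
  obtain ⟨R, rfl, rfl⟩ := hT.exists_parentTree r
  obtain ⟨t, N, ht, hNC, hN, hfree, hroot, hchildren⟩ := R.exists_weighting
  have hNr : ∀ u ∈ N, u ≠ R.root ∧ R.parent u = R.root := fun u hu =>
    ParentTree.mem_children.1 (hNC hu)
  have hconflict : ∀ v, v ≠ R.root → ∀ k : Fin 2,
      (R.coloring t s(v, R.parent v)).1 = k ∨ (R.coloring t s(v, R.parent v)).2 = k →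
      degIn2 R.graph (R.coloring t) k v = degIn2 R.graph (R.coloring t) k (R.parent v) →
      R.parent v = R.root ∧ v ∈ N := fun v hv k hk heq => by
    by_cases hvN : v ∈ N
    · exact ⟨(hNr v hvN).2, hvN⟩
    · exact absurd heq (ParentTree.degIn2_coloring_ne ht hv (hfree v hv hvN) hk)
  refine ⟨R.coloring t, N, by omega, fun w hw => ParentTree.graph_adj.2 (Or.inr (hNr w hw)),
    fun v w hvw k hk heq => ?_, fun k => ⟨R.even_degIn2_coloring ht hroot k, fun w hw => ?_⟩⟩
  · rcases ParentTree.graph_adj.1 hvw with ⟨hv, rfl⟩ | ⟨hw, rfl⟩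
    · exact Or.inr (hconflict v hv k hk heq)
    · rw [Sym2.eq_swap] at hk
      exact Or.inl (hconflict w hw k hk heq.symm)
  · refine R.even_degIn2_coloring ht (hchildren w ?_) k
    simpa [ParentTree.graph_adj, ParentTree.mem_children] using hw

/-- For every tree `T` on at least 3 vertices (so `T` has an edge and is not `K₂`) rooted at
`r`, the doubled multigraph `²T` admits a red-blue edge coloring which is locally irregular
except possibly for conflicts between `r` and at most two of its neighbours; moreover in this
coloring `r` and all its neighbours have even degree in each color class. -/
theorem stmt_15 {V : Type*} [Fintype V] [DecidableEq V] (T : SimpleGraph V)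
    [DecidableRel T.Adj] (hT : T.IsTree) (h3 : 3 ≤ Fintype.card V) (r : V) :
    ∃ c : Sym2 V → Fin 2 × Fin 2, ∃ N : Finset V,
      N.card ≤ 2 ∧ (∀ w ∈ N, T.Adj r w) ∧
      (∀ v w, T.Adj v w → ∀ k : Fin 2, ((c s(v, w)).1 = k ∨ (c s(v, w)).2 = k) →
        degIn2 T c k v = degIn2 T c k w → (v = r ∧ w ∈ N) ∨ (w = r ∧ v ∈ N)) ∧
      (∀ k : Fin 2, Even (degIn2 T c k r) ∧ ∀ w, T.Adj r w → Even (degIn2 T c k w)) :=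
  stmt_15_general T hT r
end
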